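/- arXiv:2505.09799 — 3 statements merged into one kernel-verified Lean document; each statement's English description precedes it below -/
import Mathlib

section
/- Consider the signed network coordination game on a network (V, W) with external field h and a partition V = R ∪ S (R, S disjoint). Let τ ∈ {−1,+1}^R be such that τ_i W_ij τ_j ≥ 0 for all i, j ∈ R, and let h^+, h^− ∈ ℝ^R be defined by h^+_i = τ_i h_i + w_i^S and h^−_i = τ_i h_i − w_i^S for i ∈ R. Assume the τ-transformed subnetwork (R, W^[τ]_{RR}) with entries τ_i W_ij τ_j is (h^−, h^+)-indecomposable and w_i^R − |h_i| > w_i^S for every i ∈ R. If for each y ∈ {τ, −τ} there exists a nonempty subset N̄_S^(y) ⊆ N_S^(y) that is globally BR-stable for the S-restricted game with the strategy profile of players in R frozen to y, then there exists a nonempty globally BR-stable set of strategy profiles of the SNC game contained in { x* ∈ N : x*_R ∈ {τ, −τ} }. -/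
open Finset Function

noncomputable section

/-- The binary action set `A = {−1, +1}`, as a subtype of `ℝ`. -/
abbrev Act : Type := {r : ℝ // r = 1 ∨ r = -1}

def onePt : Act := ⟨1, Or.inl rfl⟩

def negOnePt : Act := ⟨-1, Or.inr rfl⟩

def actMul (a b : Act) : Act :=
  ⟨(a : ℝ) * (b : ℝ), by rcases a.2 with h1 | h1 <;> rcases b.2 with h2 | h2 <;> norm_num [h1, h2]⟩

def actNeg (a : Act) : Act :=
  ⟨-(a : ℝ), by rcases a.2 with h1 | h1 <;> norm_num [h1]⟩

/-- Utility of player `i` in the SNC game on the network `(V, W)` with external field `h`. -/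
def utility {V : Type*} [Fintype V] (W : V → V → ℝ) (h : V → ℝ) (i : V) (x : V → Act) : ℝ :=
  h i * (x i : ℝ) + (x i : ℝ) * ∑ j, W i j * (x j : ℝ)

/-- Best response set of player `i` (depends only on `x_{−i}`). -/
def bestResponse {V : Type*} [Fintype V] [DecidableEq V] (W : V → V → ℝ) (h : V → ℝ)
    (i : V) (x : V → Act) : Set Act :=
  {a | ∀ b : Act, utility W h i (Function.update x i b) ≤ utility W h i (Function.update x i a)}

/-- Nash equilibrium of the SNC game. -/
def IsNash {V : Type*} [Fintype V] [DecidableEq V] (W : V → V → ℝ) (h : V → ℝ)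
    (x : V → Act) : Prop :=
  ∀ i, x i ∈ bestResponse W h i x

/-- One step of a best-response path. -/
def BRStep {V : Type*} [Fintype V] [DecidableEq V] (W : V → V → ℝ) (h : V → ℝ)
    (x y : V → Act) : Prop :=
  ∃ i, (∀ j, j ≠ i → y j = x j) ∧ y i ≠ x i ∧ y i ∈ bestResponse W h i x

def GloballyBRReachable {V : Type*} [Fintype V] [DecidableEq V] (W : V → V → ℝ) (h : V → ℝ)
    (X : Set (V → Act)) : Prop :=
  ∀ x : V → Act, ∃ y ∈ X, Relation.ReflTransGen (BRStep W h) x y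

def BRInvariant {V : Type*} [Fintype V] [DecidableEq V] (W : V → V → ℝ) (h : V → ℝ)
    (X : Set (V → Act)) : Prop :=
  ∀ x ∈ X, ∀ y, Relation.ReflTransGen (BRStep W h) x y → y ∈ X

def GloballyBRStable {V : Type*} [Fintype V] [DecidableEq V] (W : V → V → ℝ) (h : V → ℝ)
    (X : Set (V → Act)) : Prop :=
  GloballyBRReachable W h X ∧ BRInvariant W h X

/-- Structural balance of a signed weight matrix. -/
def StructurallyBalanced {V : Type*} (W : V → V → ℝ) : Prop :=
  ∃ P : Set V, (∀ i j, (i ∈ P ↔ j ∈ P) → 0 ≤ W i j) ∧ (∀ i j, ¬(i ∈ P ↔ j ∈ P) → W i j ≤ 0)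

/-- `(h^−, h^+)`-indecomposability of a network. -/
def Indecomposable {V : Type*} [Fintype V] [DecidableEq V] (W : V → V → ℝ)
    (hm hp : V → ℝ) : Prop :=
  ∀ P M : Finset V, P ∪ M = Finset.univ → Disjoint P M → P.Nonempty → M.Nonempty →
    (∃ i ∈ P, ∑ j ∈ P, |W i j| + hp i < ∑ j ∈ M, |W i j|) ∨
    (∃ i ∈ M, (∑ j ∈ M, |W i j|) - hm i < ∑ j ∈ P, |W i j|)

set_option linter.unusedSectionVars false
set_option linter.unusedVariables false

-- ### Act lemmas
lemma act_abs (a : Act) : |(a : ℝ)| = 1 := by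
  rcases a.2 with h | h <;> rw [h] <;> norm_num

lemma act_coe_ne_zero (a : Act) : (a : ℝ) ≠ 0 := by
  rcases a.2 with h | h <;> rw [h] <;> norm_num

lemma actNeg_coe (a : Act) : ((actNeg a : Act) : ℝ) = -(a : ℝ) := rfl

lemma actNeg_ne (a : Act) : actNeg a ≠ a := by
  intro hne
  have h1 : ((actNeg a : Act) : ℝ) = (a : ℝ) := congrArg Subtype.val hne
  rw [actNeg_coe] at h1
  exact act_coe_ne_zero a (by linarith)

lemma actNeg_actNeg (a : Act) : actNeg (actNeg a) = a := Subtype.ext (neg_neg _)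

lemma act_eq_neg_of_ne {a b : Act} (hne : a ≠ b) : a = actNeg b := by
  refine Subtype.ext ?_
  rw [actNeg_coe]
  rcases a.2 with h1 | h1 <;> rcases b.2 with h2 | h2 <;> rw [h1, h2] <;> norm_num
  · exact hne (Subtype.ext (by rw [h1, h2]))
  · exact hne (Subtype.ext (by rw [h1, h2]))

lemma act_coe_neg_of_ne {a b : Act} (hne : a ≠ b) : (a : ℝ) = -(b : ℝ) := by
  rw [act_eq_neg_of_ne hne, actNeg_coe]

lemma act_sq (a : Act) : (a : ℝ) * (a : ℝ) = 1 := by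
  rcases a.2 with h | h <;> rw [h] <;> norm_num

-- ### best response characterization
lemma utility_update {V : Type*} [Fintype V] [DecidableEq V] (W : V → V → ℝ) (h : V → ℝ)
    {i : V} (hWii : W i i = 0) (x : V → Act) (a : Act) :
    utility W h i (Function.update x i a) = (a : ℝ) * (h i + ∑ j, W i j * (x j : ℝ)) := by
  have hsum : ∑ j, W i j * ((Function.update x i a j : Act) : ℝ)
      = ∑ j, W i j * (x j : ℝ) := by
    refine Finset.sum_congr rfl fun j _ => ?_
    by_cases hj : j = i
    · subst hj; simp [hWii]
    · rw [Function.update_of_ne hj]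
  simp only [utility, Function.update_self, hsum]
  ring

lemma mem_bestResponse_iff {V : Type*} [Fintype V] [DecidableEq V] (W : V → V → ℝ) (h : V → ℝ)
    {i : V} (hWii : W i i = 0) (x : V → Act) (a : Act) :
    a ∈ bestResponse W h i x ↔ 0 ≤ (a : ℝ) * (h i + ∑ j, W i j * (x j : ℝ)) := by
  constructor
  · intro hmem
    have hle := hmem (actNeg a)
    rw [utility_update W h hWii x a, utility_update W h hWii x (actNeg a), actNeg_coe] at hle
    linarith
  · intro hnn b
    rw [utility_update W h hWii x a, utility_update W h hWii x b]
    set g := h i + ∑ j, W i j * (x j : ℝ) with hg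
    have h1 : (b : ℝ) * g ≤ |g| := by
      calc (b : ℝ) * g ≤ |(b : ℝ) * g| := le_abs_self _
        _ = |(b : ℝ)| * |g| := abs_mul _ _
        _ = |g| := by rw [act_abs]; ring
    have h2 : (a : ℝ) * g = |g| := by
      rw [← abs_of_nonneg hnn, abs_mul, act_abs, one_mul]
    linarith

section Aux

open scoped Classical

variable {V : Type*} [Fintype V] [DecidableEq V]
variable (W : V → V → ℝ) (h : V → ℝ) (R S : Finset V) (τ : {i // i ∈ R} → Act)

/-- players of `R` currently aligned with `τ`. -/
def Pset (x : V → Act) : Finset {i // i ∈ R} :=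
  Finset.univ.filter (fun j => x j.1 = τ j)

/-- players of `R` currently anti-aligned with `τ`. -/
def Mset (x : V → Act) : Finset {i // i ∈ R} :=
  Finset.univ.filter (fun j => ¬ x j.1 = τ j)

/-- local field of player `i`. -/
def gfun (i : V) (x : V → Act) : ℝ := h i + ∑ j, W i j * (x j : ℝ)

lemma Pset_union_Mset (x : V → Act) : Pset R τ x ∪ Mset R τ x = Finset.univ :=
  Finset.filter_union_filter_not_eq _ _

lemma Pset_disjoint_Mset (x : V → Act) : Disjoint (Pset R τ x) (Mset R τ x) :=
  Finset.disjoint_filter_filter_not _ _ _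

lemma mem_Pset {x : V → Act} {j : {i // i ∈ R}} : j ∈ Pset R τ x ↔ x j.1 = τ j := by
  simp [Pset]

lemma mem_Mset {x : V → Act} {j : {i // i ∈ R}} : j ∈ Mset R τ x ↔ ¬ x j.1 = τ j := by
  simp [Mset]

lemma abs_tau_mul (i j : {i // i ∈ R}) : |(τ i : ℝ) * W i.1 j.1 * (τ j : ℝ)| = |W i.1 j.1| := by
  rw [abs_mul, abs_mul, act_abs, act_abs]; ring

lemma tau_mul_eq_abs (hτ : ∀ i j : {i // i ∈ R}, 0 ≤ (τ i : ℝ) * W i.1 j.1 * (τ j : ℝ))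
    (i j : {i // i ∈ R}) : (τ i : ℝ) * W i.1 j.1 * (τ j : ℝ) = |W i.1 j.1| := by
  rw [← abs_of_nonneg (hτ i j), abs_tau_mul]

lemma tau_sumR (hτ : ∀ i j : {i // i ∈ R}, 0 ≤ (τ i : ℝ) * W i.1 j.1 * (τ j : ℝ))
    (i : {i // i ∈ R}) (x : V → Act) :
    (τ i : ℝ) * ∑ j ∈ R, W i.1 j * (x j : ℝ)
      = (∑ j ∈ Pset R τ x, |W i.1 j.1|) - ∑ j ∈ Mset R τ x, |W i.1 j.1| := by
  rw [Finset.sum_subtype R (fun _ => Iff.rfl) (fun j => W i.1 j * (x j : ℝ)),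
    Finset.mul_sum]
  rw [← Finset.sum_filter_add_sum_filter_not Finset.univ (fun j : {i // i ∈ R} => x j.1 = τ j)
    (fun j => (τ i : ℝ) * (W i.1 j.1 * (x j.1 : ℝ)))]
  have hP : ∑ j ∈ Pset R τ x, (τ i : ℝ) * (W i.1 j.1 * (x j.1 : ℝ))
      = ∑ j ∈ Pset R τ x, |W i.1 j.1| := by
    refine Finset.sum_congr rfl fun j hj => ?_
    rw [mem_Pset] at hj
    rw [hj, ← tau_mul_eq_abs W R τ hτ i j]; ring
  have hM : ∑ j ∈ Mset R τ x, (τ i : ℝ) * (W i.1 j.1 * (x j.1 : ℝ))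
      = ∑ j ∈ Mset R τ x, -|W i.1 j.1| := by
    refine Finset.sum_congr rfl fun j hj => ?_
    rw [mem_Mset] at hj
    rw [act_coe_neg_of_ne hj, ← tau_mul_eq_abs W R τ hτ i j]; ring
  rw [show (Finset.univ.filter (fun j : {i // i ∈ R} => x j.1 = τ j)) = Pset R τ x from rfl,
    show (Finset.univ.filter (fun j : {i // i ∈ R} => ¬ x j.1 = τ j)) = Mset R τ x from rfl,
    hP, hM, Finset.sum_neg_distrib, sub_eq_add_neg]

lemma abs_sumS (i : V) (x : V → Act) :
    |∑ j ∈ S, W i j * (x j : ℝ)| ≤ ∑ j ∈ S, |W i j| := by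
  refine (Finset.abs_sum_le_sum_abs _ _).trans ?_
  refine Finset.sum_le_sum fun j _ => ?_
  rw [abs_mul, act_abs, mul_one]

lemma tau_gfun (hUnion : R ∪ S = Finset.univ) (hDisj : Disjoint R S)
    (hτ : ∀ i j : {i // i ∈ R}, 0 ≤ (τ i : ℝ) * W i.1 j.1 * (τ j : ℝ))
    (i : {i // i ∈ R}) (x : V → Act) :
    (τ i : ℝ) * gfun W h i.1 x
      = (τ i : ℝ) * h i.1 + ((∑ j ∈ Pset R τ x, |W i.1 j.1|) - ∑ j ∈ Mset R τ x, |W i.1 j.1|)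
        + (τ i : ℝ) * ∑ j ∈ S, W i.1 j * (x j : ℝ) := by
  have hsplit : ∑ j, W i.1 j * (x j : ℝ)
      = (∑ j ∈ R, W i.1 j * (x j : ℝ)) + ∑ j ∈ S, W i.1 j * (x j : ℝ) := by
    rw [← hUnion, Finset.sum_union hDisj]
  rw [gfun, hsplit, mul_add, mul_add, tau_sumR W R τ hτ i x]
  ring

lemma tau_gfun_bounds (hUnion : R ∪ S = Finset.univ) (hDisj : Disjoint R S)
    (hτ : ∀ i j : {i // i ∈ R}, 0 ≤ (τ i : ℝ) * W i.1 j.1 * (τ j : ℝ))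
    (i : {i // i ∈ R}) (x : V → Act) :
    (τ i : ℝ) * h i.1 + ((∑ j ∈ Pset R τ x, |W i.1 j.1|) - ∑ j ∈ Mset R τ x, |W i.1 j.1|)
        - (∑ j ∈ S, |W i.1 j|) ≤ (τ i : ℝ) * gfun W h i.1 x ∧
    (τ i : ℝ) * gfun W h i.1 x ≤
      (τ i : ℝ) * h i.1 + ((∑ j ∈ Pset R τ x, |W i.1 j.1|) - ∑ j ∈ Mset R τ x, |W i.1 j.1|)
        + (∑ j ∈ S, |W i.1 j|) := by
  rw [tau_gfun W h R S τ hUnion hDisj hτ i x]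
  have habs : |(τ i : ℝ) * ∑ j ∈ S, W i.1 j * (x j : ℝ)| ≤ ∑ j ∈ S, |W i.1 j| := by
    rw [abs_mul, act_abs, one_mul]
    exact abs_sumS W S i.1 x
  constructor <;> cases abs_le.1 habs <;> linarith

lemma Pset_update_pos (x : V → Act) (i : {i // i ∈ R}) {a : Act} (ha : a = τ i) :
    Pset R τ (Function.update x i.1 a) = insert i (Pset R τ x) := by
  ext j
  rw [mem_Pset, Finset.mem_insert]
  by_cases hj : j = i
  · subst hj; rw [Function.update_self]; simp [ha]
  · have hv : j.1 ≠ i.1 := fun hc => hj (Subtype.ext hc)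
    rw [Function.update_of_ne hv, ← mem_Pset]
    simp [hj]

lemma Mset_update_pos (x : V → Act) (i : {i // i ∈ R}) {a : Act} (ha : a = τ i) :
    Mset R τ (Function.update x i.1 a) = (Mset R τ x).erase i := by
  ext j
  rw [mem_Mset, Finset.mem_erase]
  by_cases hj : j = i
  · subst hj; rw [Function.update_self]; simp [ha]
  · have hv : j.1 ≠ i.1 := fun hc => hj (Subtype.ext hc)
    rw [Function.update_of_ne hv, ← mem_Mset]
    simp [hj]

lemma Pset_update_neg (x : V → Act) (i : {i // i ∈ R}) {a : Act} (ha : a ≠ τ i) :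
    Pset R τ (Function.update x i.1 a) = (Pset R τ x).erase i := by
  ext j
  rw [mem_Pset, Finset.mem_erase]
  by_cases hj : j = i
  · subst hj; rw [Function.update_self]; simp [ha]
  · have hv : j.1 ≠ i.1 := fun hc => hj (Subtype.ext hc)
    rw [Function.update_of_ne hv, ← mem_Pset]
    simp [hj]

lemma Mset_update_neg (x : V → Act) (i : {i // i ∈ R}) {a : Act} (ha : a ≠ τ i) :
    Mset R τ (Function.update x i.1 a) = insert i (Mset R τ x) := by
  ext j
  rw [mem_Mset, Finset.mem_insert]
  by_cases hj : j = i
  · subst hj; rw [Function.update_self]; simp [ha]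
  · have hv : j.1 ≠ i.1 := fun hc => hj (Subtype.ext hc)
    rw [Function.update_of_ne hv, ← mem_Mset]
    simp [hj]

/-- external-field bounds used for robustness. -/
def hpf (i : {i // i ∈ R}) : ℝ := (τ i : ℝ) * h i.1 + ∑ j ∈ S, |W i.1 j|

def hmf (i : {i // i ∈ R}) : ℝ := (τ i : ℝ) * h i.1 - ∑ j ∈ S, |W i.1 j|

lemma hmf_le_hpf (i : {i // i ∈ R}) : hmf W h R S τ i ≤ hpf W h R S τ i := by
  have : (0:ℝ) ≤ ∑ j ∈ S, |W i.1 j| := Finset.sum_nonneg fun j _ => abs_nonneg _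
  rw [hmf, hpf]; linarith

lemma downStep (hdiag : ∀ i, W i i = 0) (hUnion : R ∪ S = Finset.univ) (hDisj : Disjoint R S)
    (hτ : ∀ i j : {i // i ∈ R}, 0 ≤ (τ i : ℝ) * W i.1 j.1 * (τ j : ℝ))
    (x : V → Act) (i : {i // i ∈ R}) (hiP : i ∈ Pset R τ x)
    (hlt : ∑ j ∈ Pset R τ x, |W i.1 j.1| + hpf W h R S τ i < ∑ j ∈ Mset R τ x, |W i.1 j.1|) :
    BRStep W h x (Function.update x i.1 (actNeg (τ i))) := by
  refine ⟨i.1, fun j hj => Function.update_of_ne hj _ _, ?_, ?_⟩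
  · rw [mem_Pset] at hiP
    rw [Function.update_self, hiP]
    exact actNeg_ne _
  · rw [Function.update_self, mem_bestResponse_iff W h (hdiag i.1) x, actNeg_coe]
    have hb := (tau_gfun_bounds W h R S τ hUnion hDisj hτ i x).2
    have hneg : (τ i : ℝ) * gfun W h i.1 x < 0 := by
      rw [hpf] at hlt; linarith
    have : (0:ℝ) ≤ -((τ i : ℝ) * gfun W h i.1 x) := by linarith
    calc (0:ℝ) ≤ -((τ i : ℝ) * gfun W h i.1 x) := this
      _ = -(τ i : ℝ) * (h i.1 + ∑ j, W i.1 j * (x j : ℝ)) := by rw [gfun]; ring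

lemma upStep (hdiag : ∀ i, W i i = 0) (hUnion : R ∪ S = Finset.univ) (hDisj : Disjoint R S)
    (hτ : ∀ i j : {i // i ∈ R}, 0 ≤ (τ i : ℝ) * W i.1 j.1 * (τ j : ℝ))
    (x : V → Act) (i : {i // i ∈ R}) (hiM : i ∈ Mset R τ x)
    (hlt : (∑ j ∈ Mset R τ x, |W i.1 j.1|) - hmf W h R S τ i < ∑ j ∈ Pset R τ x, |W i.1 j.1|) :
    BRStep W h x (Function.update x i.1 (τ i)) := by
  refine ⟨i.1, fun j hj => Function.update_of_ne hj _ _, ?_, ?_⟩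
  · rw [mem_Mset] at hiM
    rw [Function.update_self]
    exact fun hc => hiM hc.symm
  · rw [Function.update_self, mem_bestResponse_iff W h (hdiag i.1) x]
    have hb := (tau_gfun_bounds W h R S τ hUnion hDisj hτ i x).1
    have hpos : 0 < (τ i : ℝ) * gfun W h i.1 x := by
      rw [hmf] at hlt; linarith
    calc (0:ℝ) ≤ (τ i : ℝ) * gfun W h i.1 x := le_of_lt hpos
    _ = (τ i : ℝ) * (h i.1 + ∑ j, W i.1 j * (x j : ℝ)) := by rw [gfun]

lemma cons_pos (hdiag : ∀ i, W i i = 0) (hUnion : R ∪ S = Finset.univ) (hDisj : Disjoint R S)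
    (hτ : ∀ i j : {i // i ∈ R}, 0 ≤ (τ i : ℝ) * W i.1 j.1 * (τ j : ℝ))
    (hdeg : ∀ i ∈ R, ∑ j ∈ S, |W i j| < (∑ j ∈ R, |W i j|) - |h i|)
    (x : V → Act)
    (hcons : (∀ j : {i // i ∈ R}, x j.1 = τ j) ∨ (∀ j : {i // i ∈ R}, x j.1 = actNeg (τ j)))
    (i : {i // i ∈ R}) :
    0 < (x i.1 : ℝ) * gfun W h i.1 x := by
  have hsub : ∑ j : {i // i ∈ R}, |W i.1 j.1| = ∑ j ∈ R, |W i.1 j| :=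
    (Finset.sum_subtype R (fun _ => Iff.rfl) (fun j => |W i.1 j|)).symm
  have habs : -|h i.1| ≤ (τ i : ℝ) * h i.1 ∧ (τ i : ℝ) * h i.1 ≤ |h i.1| := by
    have h1 : |(τ i : ℝ) * h i.1| = |h i.1| := by rw [abs_mul, act_abs, one_mul]
    constructor
    · calc -|h i.1| = -|(τ i : ℝ) * h i.1| := by rw [h1]
        _ ≤ (τ i : ℝ) * h i.1 := neg_abs_le _
    · calc (τ i : ℝ) * h i.1 ≤ |(τ i : ℝ) * h i.1| := le_abs_self _
        _ = |h i.1| := h1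
  have hdg := hdeg i.1 i.2
  rcases hcons with h1 | h1
  · have hP : Pset R τ x = Finset.univ := by
      ext j; simp [mem_Pset, h1 j]
    have hM : Mset R τ x = ∅ := by
      ext j; simp [mem_Mset, h1 j]
    have hb := (tau_gfun_bounds W h R S τ hUnion hDisj hτ i x).1
    rw [hP, hM, Finset.sum_empty, hsub] at hb
    have : 0 < (τ i : ℝ) * gfun W h i.1 x := by linarith [habs.1]
    rw [h1 i]
    exact this
  · have hP : Pset R τ x = ∅ := by
      ext j
      simp only [mem_Pset, h1 j, Finset.notMem_empty, iff_false]
      exact fun hc => actNeg_ne (τ j) hc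
    have hM : Mset R τ x = Finset.univ := by
      ext j
      simp only [mem_Mset, h1 j, Finset.mem_univ, iff_true]
      exact fun hc => actNeg_ne (τ j) hc
    have hb := (tau_gfun_bounds W h R S τ hUnion hDisj hτ i x).2
    rw [hP, hM, Finset.sum_empty, hsub] at hb
    have hneg : (τ i : ℝ) * gfun W h i.1 x < 0 := by linarith [habs.2]
    have hxi : (x i.1 : ℝ) = -(τ i : ℝ) := by rw [h1 i, actNeg_coe]
    rw [hxi]
    nlinarith

lemma upPhase (hdiag : ∀ i, W i i = 0) (hUnion : R ∪ S = Finset.univ) (hDisj : Disjoint R S)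
    (hτ : ∀ i j : {i // i ∈ R}, 0 ≤ (τ i : ℝ) * W i.1 j.1 * (τ j : ℝ))
    (hind : Indecomposable (fun i j : {i // i ∈ R} => (τ i : ℝ) * W i.1 j.1 * (τ j : ℝ))
      (hmf W h R S τ) (hpf W h R S τ)) :
    ∀ n (x : V → Act), (Mset R τ x).card ≤ n →
      (∀ i ∈ Pset R τ x,
          ∑ j ∈ Mset R τ x, |W i.1 j.1| ≤ (∑ j ∈ Pset R τ x, |W i.1 j.1|) + hpf W h R S τ i) →
      ∃ x', Relation.ReflTransGen (BRStep W h) x x' ∧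
        ((∀ j : {i // i ∈ R}, x' j.1 = τ j) ∨ (∀ j : {i // i ∈ R}, x' j.1 = actNeg (τ j))) := by
  intro n
  induction n with
  | zero =>
    intro x hcard _
    refine ⟨x, Relation.ReflTransGen.refl, Or.inl fun j => ?_⟩
    have hM : Mset R τ x = ∅ := Finset.card_eq_zero.1 (Nat.le_zero.1 hcard)
    by_contra hne
    exact absurd ((mem_Mset R τ).2 hne) (by rw [hM]; exact Finset.notMem_empty j)
  | succ n ih =>
    intro x hcard hinv
    by_cases hM : Mset R τ x = ∅
    · refine ⟨x, Relation.ReflTransGen.refl, Or.inl fun j => ?_⟩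
      by_contra hne
      exact absurd ((mem_Mset R τ).2 hne) (by rw [hM]; exact Finset.notMem_empty j)
    by_cases hP : Pset R τ x = ∅
    · refine ⟨x, Relation.ReflTransGen.refl, Or.inr fun j => ?_⟩
      have : j ∉ Pset R τ x := by rw [hP]; exact Finset.notMem_empty j
      rw [mem_Pset] at this
      exact act_eq_neg_of_ne this
    rcases hind (Pset R τ x) (Mset R τ x) (Pset_union_Mset R τ x) (Pset_disjoint_Mset R τ x)
        (Finset.nonempty_of_ne_empty hP) (Finset.nonempty_of_ne_empty hM) with hL | hR
    · obtain ⟨i, hiP, hlt⟩ := hL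
      simp only [abs_tau_mul W R τ] at hlt
      exact absurd hlt (not_lt.2 (by linarith [hinv i hiP]))
    · obtain ⟨i, hiM, hlt⟩ := hR
      simp only [abs_tau_mul W R τ] at hlt
      have hstep := upStep W h R S τ hdiag hUnion hDisj hτ x i hiM hlt
      set x₁ := Function.update x i.1 (τ i) with hx₁
      have hPn : Pset R τ x₁ = insert i (Pset R τ x) := Pset_update_pos R τ x i rfl
      have hMn : Mset R τ x₁ = (Mset R τ x).erase i := Mset_update_pos R τ x i rfl
      have hiPnot : i ∉ Pset R τ x := by
        rw [mem_Pset]; exact (mem_Mset R τ).1 hiM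
      have hcard' : (Mset R τ x₁).card ≤ n := by
        rw [hMn]
        have := Finset.card_erase_lt_of_mem hiM
        omega
      have hnonneg : ∀ (k : {i // i ∈ R}) (B C : Finset {i // i ∈ R}), B ⊆ C →
          ∑ j ∈ B, |W k.1 j.1| ≤ ∑ j ∈ C, |W k.1 j.1| := fun k B C hBC =>
        Finset.sum_le_sum_of_subset_of_nonneg hBC (fun j _ _ => abs_nonneg _)
      have hinv' : ∀ k ∈ Pset R τ x₁,
          ∑ j ∈ Mset R τ x₁, |W k.1 j.1| ≤ (∑ j ∈ Pset R τ x₁, |W k.1 j.1|) + hpf W h R S τ k := by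
        intro k hk
        rw [hPn] at hk ⊢
        rw [hMn]
        have e1 : ∑ j ∈ (Mset R τ x).erase i, |W k.1 j.1| ≤ ∑ j ∈ Mset R τ x, |W k.1 j.1| :=
          hnonneg k _ _ (Finset.erase_subset _ _)
        have e2 : ∑ j ∈ Pset R τ x, |W k.1 j.1| ≤ ∑ j ∈ insert i (Pset R τ x), |W k.1 j.1| :=
          hnonneg k _ _ (Finset.subset_insert _ _)
        rcases Finset.mem_insert.1 hk with hk1 | hk2
        · subst hk1
          have := hmf_le_hpf W h R S τ k
          linarith
        · have := hinv k hk2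
          linarith
      obtain ⟨x', hrtg, hcons⟩ := ih x₁ hcard' hinv'
      exact ⟨x', Relation.ReflTransGen.head hstep hrtg, hcons⟩

lemma downPhase (hdiag : ∀ i, W i i = 0) (hUnion : R ∪ S = Finset.univ) (hDisj : Disjoint R S)
    (hτ : ∀ i j : {i // i ∈ R}, 0 ≤ (τ i : ℝ) * W i.1 j.1 * (τ j : ℝ))
    (hind : Indecomposable (fun i j : {i // i ∈ R} => (τ i : ℝ) * W i.1 j.1 * (τ j : ℝ))
      (hmf W h R S τ) (hpf W h R S τ)) :
    ∀ n (x : V → Act), (Pset R τ x).card ≤ n →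
      ∃ x', Relation.ReflTransGen (BRStep W h) x x' ∧
        ((∀ j : {i // i ∈ R}, x' j.1 = τ j) ∨ (∀ j : {i // i ∈ R}, x' j.1 = actNeg (τ j))) := by
  intro n
  induction n with
  | zero =>
    intro x hcard
    have hP : Pset R τ x = ∅ := Finset.card_eq_zero.1 (Nat.le_zero.1 hcard)
    refine upPhase W h R S τ hdiag hUnion hDisj hτ hind (Mset R τ x).card x le_rfl ?_
    intro i hi
    exact absurd hi (by rw [hP]; exact Finset.notMem_empty i)
  | succ n ih =>
    intro x hcard
    by_cases hd : ∃ i ∈ Pset R τ x,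
        (∑ j ∈ Pset R τ x, |W i.1 j.1|) + hpf W h R S τ i < ∑ j ∈ Mset R τ x, |W i.1 j.1|
    · obtain ⟨i, hiP, hlt⟩ := hd
      have hstep := downStep W h R S τ hdiag hUnion hDisj hτ x i hiP hlt
      set x₁ := Function.update x i.1 (actNeg (τ i)) with hx₁
      have hPn : Pset R τ x₁ = (Pset R τ x).erase i := Pset_update_neg R τ x i (actNeg_ne _)
      have hcard' : (Pset R τ x₁).card ≤ n := by
        rw [hPn]
        have := Finset.card_erase_lt_of_mem hiP
        omega
      obtain ⟨x', hrtg, hcons⟩ := ih x₁ hcard'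
      exact ⟨x', Relation.ReflTransGen.head hstep hrtg, hcons⟩
    · push_neg at hd
      exact upPhase W h R S τ hdiag hUnion hDisj hτ hind (Mset R τ x).card x le_rfl hd

lemma gres_eq (hUnion : R ∪ S = Finset.univ) (hDisj : Disjoint R S)
    (y : {i // i ∈ R} → Act) (x : V → Act) (hxR : ∀ j : {i // i ∈ R}, x j.1 = y j) (i : V) :
    h i + ∑ j, W i j * (x j : ℝ)
      = (h i + ∑ j : {i // i ∈ R}, W i j.1 * (y j : ℝ))
        + ∑ j : {i // i ∈ S}, W i j.1 * ((x j.1 : Act) : ℝ) := by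
  have hsplit : ∑ j, W i j * (x j : ℝ)
      = (∑ j ∈ R, W i j * (x j : ℝ)) + ∑ j ∈ S, W i j * (x j : ℝ) := by
    rw [← hUnion, Finset.sum_union hDisj]
  rw [hsplit, Finset.sum_subtype R (fun _ => Iff.rfl) (fun j => W i j * (x j : ℝ)),
    Finset.sum_subtype S (fun _ => Iff.rfl) (fun j => W i j * (x j : ℝ))]
  have : ∑ j : {i // i ∈ R}, W i j.1 * ((x j.1 : Act) : ℝ)
      = ∑ j : {i // i ∈ R}, W i j.1 * (y j : ℝ) :=
    Finset.sum_congr rfl fun j _ => by rw [hxR j]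
  rw [this]; ring

lemma BR_SR (hdiag : ∀ i, W i i = 0) (hUnion : R ∪ S = Finset.univ) (hDisj : Disjoint R S)
    (y : {i // i ∈ R} → Act) (x : V → Act) (hxR : ∀ j : {i // i ∈ R}, x j.1 = y j)
    (i : {i // i ∈ S}) (a : Act) :
    a ∈ bestResponse W h i.1 x ↔
      a ∈ bestResponse (fun i j : {i // i ∈ S} => W i.1 j.1)
        (fun i : {i // i ∈ S} => h i.1 + ∑ j : {i // i ∈ R}, W i.1 j.1 * (y j : ℝ))
        i (fun j : {i // i ∈ S} => x j.1) := by
  have e : h i.1 + ∑ j, W i.1 j * (x j : ℝ)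
      = (fun i : {i // i ∈ S} => h i.1 + ∑ j : {i // i ∈ R}, W i.1 j.1 * (y j : ℝ)) i
        + ∑ j, (fun i j : {i // i ∈ S} => W i.1 j.1) i j
            * (((fun j : {i // i ∈ S} => x j.1) j : Act) : ℝ) :=
    gres_eq W h R S hUnion hDisj y x hxR i.1
  rw [mem_bestResponse_iff W h (hdiag i.1) x a,
    mem_bestResponse_iff (fun i j : {i // i ∈ S} => W i.1 j.1)
      (fun i : {i // i ∈ S} => h i.1 + ∑ j : {i // i ∈ R}, W i.1 j.1 * (y j : ℝ))
      (show (fun i j : {i // i ∈ S} => W i.1 j.1) i i = 0 from hdiag i.1)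
      (fun j : {i // i ∈ S} => x j.1) a, e]

lemma liftRTG (hdiag : ∀ i, W i i = 0) (hUnion : R ∪ S = Finset.univ) (hDisj : Disjoint R S)
    (y : {i // i ∈ R} → Act) {z z' : {i // i ∈ S} → Act}
    (hr : Relation.ReflTransGen
      (BRStep (fun i j : {i // i ∈ S} => W i.1 j.1)
        (fun i : {i // i ∈ S} => h i.1 + ∑ j : {i // i ∈ R}, W i.1 j.1 * (y j : ℝ))) z z') :
    ∀ x : V → Act, (∀ j : {i // i ∈ R}, x j.1 = y j) → (∀ j : {i // i ∈ S}, x j.1 = z j) →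
      ∃ x', Relation.ReflTransGen (BRStep W h) x x' ∧
        (∀ j : {i // i ∈ R}, x' j.1 = y j) ∧ (∀ j : {i // i ∈ S}, x' j.1 = z' j) := by
  induction hr with
  | refl => exact fun x hxR hxS => ⟨x, Relation.ReflTransGen.refl, hxR, hxS⟩
  | @tail b c hzb hstep ih =>
    intro x hxR hxS
    obtain ⟨x'', hrtg, hxR'', hxS''⟩ := ih x hxR hxS
    obtain ⟨i, hoth, hne, hBR⟩ := hstep
    have hbx : (fun j : {i // i ∈ S} => x'' j.1) = b := funext hxS''
    refine ⟨Function.update x'' i.1 (c i), ?_, ?_, ?_⟩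
    · refine hrtg.tail ⟨i.1, fun j hj => Function.update_of_ne hj _ _, ?_, ?_⟩
      · rw [Function.update_self, hxS'' i]
        exact hne
      · rw [Function.update_self]
        refine (BR_SR W h R S hdiag hUnion hDisj y x'' hxR'' i (c i)).2 ?_
        rw [hbx]
        exact hBR
    · intro j
      have hv : j.1 ≠ i.1 := by
        intro hc
        exact absurd (hc ▸ j.2) (Finset.disjoint_right.1 hDisj i.2)
      rw [Function.update_of_ne hv]
      exact hxR'' j
    · intro j
      by_cases hj : j = i
      · subst hj
        rw [Function.update_self]
      · have hv : j.1 ≠ i.1 := fun hc => hj (Subtype.ext hc)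
        rw [Function.update_of_ne hv, hxS'' j, hoth j hj]

lemma stepProject (hdiag : ∀ i, W i i = 0) (hUnion : R ∪ S = Finset.univ) (hDisj : Disjoint R S)
    (hτ : ∀ i j : {i // i ∈ R}, 0 ≤ (τ i : ℝ) * W i.1 j.1 * (τ j : ℝ))
    (hdeg : ∀ i ∈ R, ∑ j ∈ S, |W i j| < (∑ j ∈ R, |W i j|) - |h i|)
    (y : {i // i ∈ R} → Act) (hy : y = τ ∨ y = (fun j => actNeg (τ j)))
    {x x' : V → Act} (hstep : BRStep W h x x') (hxR : ∀ j : {i // i ∈ R}, x j.1 = y j) :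
    (∀ j : {i // i ∈ R}, x' j.1 = y j) ∧
      BRStep (fun i j : {i // i ∈ S} => W i.1 j.1)
        (fun i : {i // i ∈ S} => h i.1 + ∑ j : {i // i ∈ R}, W i.1 j.1 * (y j : ℝ))
        (fun j : {i // i ∈ S} => x j.1) (fun j : {i // i ∈ S} => x' j.1) := by
  obtain ⟨i, hoth, hne, hBR⟩ := hstep
  have hcons : (∀ j : {i // i ∈ R}, x j.1 = τ j) ∨ (∀ j : {i // i ∈ R}, x j.1 = actNeg (τ j)) := by
    rcases hy with rfl | rfl
    · exact Or.inl hxR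
    · exact Or.inr fun j => hxR j
  have hiS : i ∈ S := by
    by_cases hiR : i ∈ R
    · exfalso
      have hpos := cons_pos W h R S τ hdiag hUnion hDisj hτ hdeg x hcons ⟨i, hiR⟩
      rw [mem_bestResponse_iff W h (hdiag i) x] at hBR
      have hcoe : (x' i : ℝ) = -((x i : Act) : ℝ) := act_coe_neg_of_ne hne
      rw [hcoe] at hBR
      have heq : -((x i : Act) : ℝ) * (h i + ∑ j, W i j * (x j : ℝ))
          = -(((x i : Act) : ℝ) * gfun W h i x) := by rw [gfun]; ring
      rw [heq] at hBR
      linarith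
    · rcases Finset.mem_union.1 (hUnion ▸ Finset.mem_univ i) with hc | hc
      · exact absurd hc hiR
      · exact hc
  constructor
  · intro j
    have hv : j.1 ≠ i := by
      intro hc
      exact Finset.disjoint_left.1 hDisj (hc ▸ j.2) hiS
    rw [hoth j.1 hv]
    exact hxR j
  · refine ⟨⟨i, hiS⟩, ?_, hne, ?_⟩
    · intro j hj
      exact hoth j.1 fun hc => hj (Subtype.ext hc)
    · exact (BR_SR W h R S hdiag hUnion hDisj y x hxR ⟨i, hiS⟩ (x' i)).1 hBR

lemma isNash_of (hdiag : ∀ i, W i i = 0) (hUnion : R ∪ S = Finset.univ) (hDisj : Disjoint R S)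
    (hτ : ∀ i j : {i // i ∈ R}, 0 ≤ (τ i : ℝ) * W i.1 j.1 * (τ j : ℝ))
    (hdeg : ∀ i ∈ R, ∑ j ∈ S, |W i j| < (∑ j ∈ R, |W i j|) - |h i|)
    (y : {i // i ∈ R} → Act) (hy : y = τ ∨ y = (fun j => actNeg (τ j)))
    (x : V → Act) (hxR : ∀ j : {i // i ∈ R}, x j.1 = y j)
    (hnashS : IsNash (fun i j : {i // i ∈ S} => W i.1 j.1)
      (fun i : {i // i ∈ S} => h i.1 + ∑ j : {i // i ∈ R}, W i.1 j.1 * (y j : ℝ))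
      (fun j : {i // i ∈ S} => x j.1)) :
    IsNash W h x := by
  have hcons : (∀ j : {i // i ∈ R}, x j.1 = τ j) ∨ (∀ j : {i // i ∈ R}, x j.1 = actNeg (τ j)) := by
    rcases hy with rfl | rfl
    · exact Or.inl hxR
    · exact Or.inr fun j => hxR j
  intro i
  by_cases hiR : i ∈ R
  · have hpos := cons_pos W h R S τ hdiag hUnion hDisj hτ hdeg x hcons ⟨i, hiR⟩
    rw [mem_bestResponse_iff W h (hdiag i) x]
    exact le_of_lt hpos
  · have hiS : i ∈ S := by
      rcases Finset.mem_union.1 (hUnion ▸ Finset.mem_univ i) with hc | hc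
      · exact absurd hc hiR
      · exact hc
    exact (BR_SR W h R S hdiag hUnion hDisj y x hxR ⟨i, hiS⟩ (x i)).2 (hnashS ⟨i, hiS⟩)

end Aux


theorem stmt16 {V : Type*} [Fintype V] [DecidableEq V] [Nonempty V]
    (W : V → V → ℝ) (h : V → ℝ) (hdiag : ∀ i, W i i = 0)
    (R S : Finset V) (hUnion : R ∪ S = Finset.univ) (hDisj : Disjoint R S)
    (τ : {i // i ∈ R} → Act)
    (hτ : ∀ i j : {i // i ∈ R}, 0 ≤ (τ i : ℝ) * W i.1 j.1 * (τ j : ℝ))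
    (hind : Indecomposable (fun i j : {i // i ∈ R} => (τ i : ℝ) * W i.1 j.1 * (τ j : ℝ))
      (fun i : {i // i ∈ R} => (τ i : ℝ) * h i.1 - ∑ j ∈ S, |W i.1 j|)
      (fun i : {i // i ∈ R} => (τ i : ℝ) * h i.1 + ∑ j ∈ S, |W i.1 j|))
    (hdeg : ∀ i ∈ R, ∑ j ∈ S, |W i j| < (∑ j ∈ R, |W i j|) - |h i|)
    (hstab : ∀ y : {i // i ∈ R} → Act,
      (y = τ ∨ y = fun j => actNeg (τ j)) →
      ∃ Nb : Set ({i // i ∈ S} → Act), Nb.Nonempty ∧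
        Nb ⊆ {z : {i // i ∈ S} → Act | IsNash (fun i j : {i // i ∈ S} => W i.1 j.1)
          (fun i : {i // i ∈ S} => h i.1 + ∑ j : {i // i ∈ R}, W i.1 j.1 * (y j : ℝ)) z} ∧
        GloballyBRStable (fun i j : {i // i ∈ S} => W i.1 j.1)
          (fun i : {i // i ∈ S} => h i.1 + ∑ j : {i // i ∈ R}, W i.1 j.1 * (y j : ℝ)) Nb) :
    ∃ Nbar : Set (V → Act), Nbar.Nonempty ∧ GloballyBRStable W h Nbar ∧
      Nbar ⊆ {x : V → Act | IsNash W h x ∧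
        ((∀ i : {i // i ∈ R}, x i.1 = τ i) ∨ (∀ i : {i // i ∈ R}, x i.1 = actNeg (τ i)))} := by
  classical
  obtain ⟨NT, hNTne, hNTnash, hNTstab⟩ := hstab τ (Or.inl rfl)
  obtain ⟨NN, hNNne, hNNnash, hNNstab⟩ := hstab (fun j => actNeg (τ j)) (Or.inr rfl)
  have hind' : Indecomposable (fun i j : {i // i ∈ R} => (τ i : ℝ) * W i.1 j.1 * (τ j : ℝ))
      (hmf W h R S τ) (hpf W h R S τ) := hind
  refine ⟨{x : V → Act |
      ((∀ j : {i // i ∈ R}, x j.1 = τ j) ∧ (fun j : {i // i ∈ S} => x j.1) ∈ NT) ∨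
      ((∀ j : {i // i ∈ R}, x j.1 = actNeg (τ j)) ∧ (fun j : {i // i ∈ S} => x j.1) ∈ NN)},
    ?_, ⟨?_, ?_⟩, ?_⟩
  · -- nonempty
    obtain ⟨z0, hz0⟩ := hNTne
    have hmemS : ∀ i : V, i ∉ R → i ∈ S := by
      intro i hi
      rcases Finset.mem_union.1 (hUnion ▸ Finset.mem_univ i) with hc | hc
      · exact absurd hc hi
      · exact hc
    refine ⟨fun i => if hi : i ∈ R then τ ⟨i, hi⟩ else z0 ⟨i, hmemS i hi⟩, Or.inl ⟨?_, ?_⟩⟩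
    · intro j
      exact dif_pos j.2
    · have : (fun j : {i // i ∈ S} =>
          (fun i => if hi : i ∈ R then τ ⟨i, hi⟩ else z0 ⟨i, hmemS i hi⟩) j.1) = z0 := by
        funext j
        exact dif_neg (Finset.disjoint_right.1 hDisj j.2)
      rw [this]
      exact hz0
  · -- globally BR reachable
    intro x
    obtain ⟨x1, hrtg1, hcons⟩ :=
      downPhase W h R S τ hdiag hUnion hDisj hτ hind' (Pset R τ x).card x le_rfl
    rcases hcons with hc | hc
    · obtain ⟨z', hz'NT, hrtg_res⟩ := hNTstab.1 (fun j : {i // i ∈ S} => x1 j.1)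
      obtain ⟨x2, hrtg2, hx2R, hx2S⟩ :=
        liftRTG W h R S hdiag hUnion hDisj τ hrtg_res x1 hc (fun j => rfl)
      refine ⟨x2, Or.inl ⟨hx2R, ?_⟩, hrtg1.trans hrtg2⟩
      have : (fun j : {i // i ∈ S} => x2 j.1) = z' := funext hx2S
      rw [this]
      exact hz'NT
    · obtain ⟨z', hz'NN, hrtg_res⟩ := hNNstab.1 (fun j : {i // i ∈ S} => x1 j.1)
      obtain ⟨x2, hrtg2, hx2R, hx2S⟩ :=
        liftRTG W h R S hdiag hUnion hDisj (fun j => actNeg (τ j)) hrtg_res x1 hc (fun j => rfl)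
      refine ⟨x2, Or.inr ⟨hx2R, ?_⟩, hrtg1.trans hrtg2⟩
      have : (fun j : {i // i ∈ S} => x2 j.1) = z' := funext hx2S
      rw [this]
      exact hz'NN
  · -- BR invariant
    intro x hx y hrtg
    induction hrtg with
    | refl => exact hx
    | tail hab hstep ih =>
      rcases ih with ⟨hbR, hbS⟩ | ⟨hbR, hbS⟩
      · obtain ⟨hcR, hstepres⟩ :=
          stepProject W h R S τ hdiag hUnion hDisj hτ hdeg τ (Or.inl rfl) hstep hbR
        exact Or.inl ⟨hcR, hNTstab.2 _ hbS _ (Relation.ReflTransGen.single hstepres)⟩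
      · obtain ⟨hcR, hstepres⟩ :=
          stepProject W h R S τ hdiag hUnion hDisj hτ hdeg (fun j => actNeg (τ j))
            (Or.inr rfl) hstep hbR
        exact Or.inr ⟨hcR, hNNstab.2 _ hbS _ (Relation.ReflTransGen.single hstepres)⟩
  · -- contained in Nash equilibria with consensus on R
    intro x hx
    rcases hx with ⟨hxR, hxS⟩ | ⟨hxR, hxS⟩
    · exact ⟨isNash_of W h R S τ hdiag hUnion hDisj hτ hdeg τ (Or.inl rfl) x hxR
        (hNTnash hxS), Or.inl hxR⟩
    · exact ⟨isNash_of W h R S τ hdiag hUnion hDisj hτ hdeg (fun j => actNeg (τ j))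
        (Or.inr rfl) x hxR (hNNnash hxS), Or.inr hxR⟩
end
end

section
/- Consider the signed network coordination game on a network (V, W) with external field h and a partition V = R ∪ S (R, S disjoint) such that both the subnetwork (R, W_{RR}) and the subnetwork (S, W_{SS}) are structurally balanced. Let τ ∈ {−1,+1}^R be such that τ_i W_ij τ_j ≥ 0 for all i, j ∈ R, and let h^+, h^− ∈ ℝ^R be defined by h^+_i = τ_i h_i + w_i^S and h^−_i = τ_i h_i − w_i^S for i ∈ R. If the τ-transformed subnetwork (R, W^[τ]_{RR}) with entries τ_i W_ij τ_j is (h^−, h^+)-indecomposable and w_i^R − |h_i| > w_i^S for every i ∈ R, then the set { x* ∈ N : x*_R ∈ {τ, −τ} } of Nash equilibria of the SNC game is nonempty and globally BR-reachable. -/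
open Finset Function

noncomputable section

namespace SNCAux

variable {V : Type*} [Fintype V] [DecidableEq V]

lemma act_abs (a : Act) : |(a : ℝ)| = 1 := by
  rcases a.2 with h1 | h1 <;> rw [h1] <;> norm_num

lemma actNeg_coe (a : Act) : ((actNeg a : Act) : ℝ) = -(a : ℝ) := rfl

lemma actNeg_ne (a : Act) : actNeg a ≠ a := by
  intro hc
  have h2 : -(a : ℝ) = (a : ℝ) := congrArg Subtype.val hc
  rcases a.2 with h1 | h1 <;> rw [h1] at h2 <;> norm_num at h2

def dfun (W : V → V → ℝ) (h : V → ℝ) (x : V → Act) (i : V) : ℝ :=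
  h i + ∑ j, W i j * (x j : ℝ)

lemma utility_update (W : V → V → ℝ) (h : V → ℝ) (hdiag : ∀ i, W i i = 0)
    (i : V) (x : V → Act) (a : Act) :
    utility W h i (Function.update x i a) = (a : ℝ) * dfun W h x i := by
  unfold utility dfun
  have hs : ∑ j, W i j * ((Function.update x i a j : Act) : ℝ) = ∑ j, W i j * (x j : ℝ) := by
    refine Finset.sum_congr rfl fun j _ => ?_
    by_cases hj : j = i
    · subst hj; simp [hdiag]
    · simp [Function.update_of_ne hj]
  rw [Function.update_self, hs]; ring

lemma dfun_update (W : V → V → ℝ) (h : V → ℝ) (x : V → Act) (i : V) (a : Act) (k : V) :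
    dfun W h (Function.update x i a) k = dfun W h x k + W k i * ((a : ℝ) - (x i : ℝ)) := by
  unfold dfun
  have hs : ∀ j, W k j * ((Function.update x i a j : Act) : ℝ)
      = W k j * (x j : ℝ) + (if j = i then W k i * ((a : ℝ) - (x i : ℝ)) else 0) := by
    intro j; by_cases hj : j = i
    · subst hj; simp [Function.update_self]; ring
    · simp [Function.update_of_ne hj, hj]
  simp only [hs, Finset.sum_add_distrib, Finset.sum_ite_eq' Finset.univ i, Finset.mem_univ,
    if_true]
  ring

lemma mem_bestResponse_iff (W : V → V → ℝ) (h : V → ℝ) (hdiag : ∀ i, W i i = 0)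
    (i : V) (x : V → Act) (a : Act) :
    a ∈ bestResponse W h i x ↔ 0 ≤ (a : ℝ) * dfun W h x i := by
  simp only [bestResponse, Set.mem_setOf_eq]
  constructor
  · intro ha
    have h2 := ha (actNeg a)
    rw [utility_update W h hdiag, utility_update W h hdiag, actNeg_coe] at h2
    nlinarith [h2]
  · intro ha b
    rw [utility_update W h hdiag, utility_update W h hdiag]
    rcases a.2 with h1 | h1 <;> rcases b.2 with h2 | h2 <;> rw [h1, h2] <;> rw [h1] at ha <;>
      linarith

lemma brStep_flip (W : V → V → ℝ) (h : V → ℝ) (hdiag : ∀ i, W i i = 0)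
    (x : V → Act) (i : V) (hle : (x i : ℝ) * dfun W h x i ≤ 0) :
    BRStep W h x (Function.update x i (actNeg (x i))) := by
  refine ⟨i, fun j hj => Function.update_of_ne hj _ _, ?_, ?_⟩
  · rw [Function.update_self]; exact actNeg_ne _
  · simp only [Function.update_self]
    rw [mem_bestResponse_iff W h hdiag, actNeg_coe]
    linarith

lemma reach (W : V → V → ℝ) (h : V → ℝ) (I Q : (V → Act) → Prop) (μ : (V → Act) → ℕ)
    (step : ∀ x, I x → ¬ Q x → ∃ y, BRStep W h x y ∧ I y ∧ μ y < μ x) :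
    ∀ x, I x → ∃ y, I y ∧ Q y ∧ Relation.ReflTransGen (BRStep W h) x y := by
  suffices H : ∀ n x, μ x ≤ n → I x → ∃ y, I y ∧ Q y ∧ Relation.ReflTransGen (BRStep W h) x y by
    exact fun x hI => H (μ x) x le_rfl hI
  intro n
  induction n with
  | zero =>
    intro x hx hI
    by_cases hQ : Q x
    · exact ⟨x, hI, hQ, Relation.ReflTransGen.refl⟩
    · obtain ⟨y, _, _, hlt⟩ := step x hI hQ; omega
  | succ n ih =>
    intro x hx hI
    by_cases hQ : Q x
    · exact ⟨x, hI, hQ, Relation.ReflTransGen.refl⟩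
    · obtain ⟨y, hstep, hIy, hlt⟩ := step x hI hQ
      obtain ⟨z, h1, h2, h3⟩ := ih y (by omega) hIy
      exact ⟨z, h1, h2, Relation.ReflTransGen.head hstep h3⟩

lemma sum_subtype_filter {V : Type*} (R : Finset V) (p : V → Prop) [DecidablePred p]
    (f : V → ℝ) :
    ∑ j ∈ Finset.univ.filter (fun j : {i // i ∈ R} => p j.1), f j.1
      = ∑ j ∈ R.filter p, f j := by
  rw [Finset.sum_filter, Finset.sum_filter]
  exact Finset.sum_coe_sort R (fun v => if p v then f v else 0)

lemma filter_update_card_lt {V : Type*} [DecidableEq V] (T : Finset V) (q : V → Act → Prop)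
    [∀ j a, Decidable (q j a)] (x : V → Act) (i : V) (a : Act)
    (hi : i ∈ T) (hqi : q i (x i)) (hqa : ¬ q i a) :
    (T.filter (fun j => q j (Function.update x i a j))).card
      < (T.filter (fun j => q j (x j))).card := by
  have hsub : T.filter (fun j => q j (Function.update x i a j)) ⊆ T.filter (fun j => q j (x j)) := by
    intro j hj
    obtain ⟨hjT, hq⟩ := Finset.mem_filter.1 hj
    by_cases hji : j = i
    · subst hji; rw [Function.update_self] at hq; exact absurd hq hqa
    · rw [Function.update_of_ne hji] at hq
      exact Finset.mem_filter.2 ⟨hjT, hq⟩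
  have hin : i ∈ T.filter (fun j => q j (x j)) := Finset.mem_filter.2 ⟨hi, hqi⟩
  have hnotin : i ∉ T.filter (fun j => q j (Function.update x i a j)) := by
    intro hc
    have := (Finset.mem_filter.1 hc).2
    rw [Function.update_self] at this
    exact hqa this
  exact Finset.card_lt_card ((Finset.ssubset_iff_of_subset hsub).2 ⟨i, hin, hnotin⟩)

end SNCAux

theorem stmt17 {V : Type*} [Fintype V] [DecidableEq V] [Nonempty V]
    (W : V → V → ℝ) (h : V → ℝ) (hdiag : ∀ i, W i i = 0)
    (R S : Finset V) (hUnion : R ∪ S = Finset.univ) (hDisj : Disjoint R S)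
    (hsbR : StructurallyBalanced (fun i j : {i // i ∈ R} => W i.1 j.1))
    (hsbS : StructurallyBalanced (fun i j : {i // i ∈ S} => W i.1 j.1))
    (τ : {i // i ∈ R} → Act)
    (hτ : ∀ i j : {i // i ∈ R}, 0 ≤ (τ i : ℝ) * W i.1 j.1 * (τ j : ℝ))
    (hind : Indecomposable (fun i j : {i // i ∈ R} => (τ i : ℝ) * W i.1 j.1 * (τ j : ℝ))
      (fun i : {i // i ∈ R} => (τ i : ℝ) * h i.1 - ∑ j ∈ S, |W i.1 j|)
      (fun i : {i // i ∈ R} => (τ i : ℝ) * h i.1 + ∑ j ∈ S, |W i.1 j|))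
    (hdeg : ∀ i ∈ R, ∑ j ∈ S, |W i j| < (∑ j ∈ R, |W i j|) - |h i|) :
    ({x : V → Act | IsNash W h x ∧
        ((∀ i : {i // i ∈ R}, x i.1 = τ i) ∨ (∀ i : {i // i ∈ R}, x i.1 = actNeg (τ i)))}).Nonempty ∧
    GloballyBRReachable W h
      {x : V → Act | IsNash W h x ∧
        ((∀ i : {i // i ∈ R}, x i.1 = τ i) ∨ (∀ i : {i // i ∈ R}, x i.1 = actNeg (τ i)))} := by
  classical
  obtain ⟨PS, hPS1, hPS2⟩ := hsbS
  set g : V → ℝ := fun i =>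
    if hi : i ∈ R then (τ ⟨i, hi⟩ : ℝ)
    else if ∃ hs : i ∈ S, (⟨i, hs⟩ : {i // i ∈ S}) ∈ PS then 1 else -1 with hgdef
  have hSnotR : ∀ i ∈ S, i ∉ R := fun i hi => Finset.disjoint_right.1 hDisj hi
  have hRorS : ∀ i : V, i ∈ R ∨ i ∈ S := by
    intro i
    have : i ∈ R ∪ S := by rw [hUnion]; exact Finset.mem_univ i
    exact Finset.mem_union.1 this
  have hgR : ∀ (i : V) (hi : i ∈ R), g i = (τ ⟨i, hi⟩ : ℝ) := by
    intro i hi; simp only [hgdef]; rw [dif_pos hi]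
  have hgR' : ∀ i : {i // i ∈ R}, g i.1 = (τ i : ℝ) := by
    rintro ⟨v, hv⟩; exact hgR v hv
  have hgS : ∀ (i : V) (hi : i ∈ S),
      g i = if (⟨i, hi⟩ : {i // i ∈ S}) ∈ PS then 1 else -1 := by
    intro i hi
    simp only [hgdef]
    rw [dif_neg (hSnotR i hi)]
    by_cases hP : (⟨i, hi⟩ : {i // i ∈ S}) ∈ PS
    · rw [if_pos ⟨hi, hP⟩, if_pos hP]
    · rw [if_neg, if_neg hP]
      rintro ⟨hs, hm⟩
      exact hP hm
  have hg1 : ∀ i, g i = 1 ∨ g i = -1 := by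
    intro i
    rcases hRorS i with hi | hi
    · rw [hgR i hi]; exact (τ ⟨i, hi⟩).2
    · rw [hgS i hi]; split <;> simp
  have habsg : ∀ i, |g i| = 1 := by
    intro i; rcases hg1 i with h1 | h1 <;> rw [h1] <;> norm_num
  have hgne : ∀ i, ¬ (-g i = g i) := by
    intro i; rcases hg1 i with h1 | h1 <;> rw [h1] <;> norm_num
  have hgSS : ∀ i j, i ∈ S → j ∈ S → 0 ≤ g i * W i j * g j := by
    intro i j hi hj
    rw [hgS i hi, hgS j hj]
    split_ifs with h1 h2 h2
    · have := hPS1 ⟨i, hi⟩ ⟨j, hj⟩ (by simp [h1, h2]); nlinarith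
    · have := hPS2 ⟨i, hi⟩ ⟨j, hj⟩ (by simp [h1, h2]); nlinarith
    · have := hPS2 ⟨i, hi⟩ ⟨j, hj⟩ (by simp [h1, h2]); nlinarith
    · have := hPS1 ⟨i, hi⟩ ⟨j, hj⟩ (by simp [h1, h2]); nlinarith
  have hgRR : ∀ i j, i ∈ R → j ∈ R → 0 ≤ g i * W i j * g j := by
    intro i j hi hj
    rw [hgR i hi, hgR j hj]
    exact hτ ⟨i, hi⟩ ⟨j, hj⟩
  have habs_prod : ∀ i j, i ∈ R → j ∈ R → g i * W i j * g j = |W i j| := by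
    intro i j hi hj
    have h0 := hgRR i j hi hj
    calc g i * W i j * g j = |g i * W i j * g j| := (abs_of_nonneg h0).symm
      _ = |W i j| := by rw [abs_mul, abs_mul, habsg, habsg]; ring
  have habs_prod' : ∀ i j : {i // i ∈ R},
      |(τ i : ℝ) * W i.1 j.1 * (τ j : ℝ)| = g i.1 * W i.1 j.1 * g j.1 := by
    intro i j
    rw [← hgR' i, ← hgR' j]
    exact abs_of_nonneg (hgRR i.1 j.1 i.2 j.2)
  have hmis : ∀ (x : V → Act) (i : V), ¬ ((x i : ℝ) = g i) → (x i : ℝ) = -g i := by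
    intro x i hne
    rcases (x i).2 with h1 | h1 <;> rcases hg1 i with h2 | h2 <;> rw [h1, h2] <;>
      rw [h1, h2] at hne <;> first | (exact absurd rfl hne) | norm_num
  have hsplit : ∀ (x : V → Act) (i : V), SNCAux.dfun W h x i
      = h i + (∑ j ∈ R, W i j * (x j : ℝ)) + ∑ j ∈ S, W i j * (x j : ℝ) := by
    intro x i
    simp only [SNCAux.dfun]
    rw [← hUnion, Finset.sum_union hDisj]
    ring
  have hSbound : ∀ (x : V → Act) (i : V),
      |∑ j ∈ S, W i j * (x j : ℝ)| ≤ ∑ j ∈ S, |W i j| := by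
    intro x i
    calc |∑ j ∈ S, W i j * (x j : ℝ)| ≤ ∑ j ∈ S, |W i j * (x j : ℝ)| :=
          Finset.abs_sum_le_sum_abs _ _
      _ = ∑ j ∈ S, |W i j| := by
          refine Finset.sum_congr rfl fun j _ => ?_
          rw [abs_mul, SNCAux.act_abs (x j), mul_one]
  have hdecompR : ∀ (x : V → Act) (i : V), i ∈ R → g i * SNCAux.dfun W h x i
      = g i * h i + (∑ j ∈ R.filter (fun j => (x j : ℝ) = g j), g i * W i j * g j)
        - (∑ j ∈ R.filter (fun j => ¬ ((x j : ℝ) = g j)), g i * W i j * g j)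
        + g i * ∑ j ∈ S, W i j * (x j : ℝ) := by
    intro x i hi
    have e0 : ∑ j ∈ R, W i j * (x j : ℝ)
        = (∑ j ∈ R.filter (fun j => (x j : ℝ) = g j), W i j * (x j : ℝ))
          + ∑ j ∈ R.filter (fun j => ¬ ((x j : ℝ) = g j)), W i j * (x j : ℝ) :=
      (Finset.sum_filter_add_sum_filter_not R _ _).symm
    have e1 : ∑ j ∈ R.filter (fun j => (x j : ℝ) = g j), W i j * (x j : ℝ)
        = ∑ j ∈ R.filter (fun j => (x j : ℝ) = g j), W i j * g j :=
      Finset.sum_congr rfl fun j hj => by rw [(Finset.mem_filter.1 hj).2]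
    have e2 : ∑ j ∈ R.filter (fun j => ¬ ((x j : ℝ) = g j)), W i j * (x j : ℝ)
        = -∑ j ∈ R.filter (fun j => ¬ ((x j : ℝ) = g j)), W i j * g j := by
      rw [← Finset.sum_neg_distrib]
      exact Finset.sum_congr rfl fun j hj => by
        rw [hmis x j (Finset.mem_filter.1 hj).2]; ring
    have e3 : ∀ (T : Finset V), g i * ∑ j ∈ T, W i j * g j = ∑ j ∈ T, g i * W i j * g j := by
      intro T; rw [Finset.mul_sum]; exact Finset.sum_congr rfl fun j _ => by ring
    rw [hsplit x i, e0, e1, e2, ← e3, ← e3]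
    ring
  -- key lemma from indecomposability
  have keyA : ∀ x : V → Act,
      (R.filter (fun j => (x j : ℝ) = g j)).Nonempty →
      (R.filter (fun j => ¬ ((x j : ℝ) = g j))).Nonempty →
      (∀ i ∈ R.filter (fun j => ¬ ((x j : ℝ) = g j)), g i * SNCAux.dfun W h x i < 0) →
      ∃ i ∈ R.filter (fun j => (x j : ℝ) = g j), g i * SNCAux.dfun W h x i < 0 := by
    intro x hP hM hcoh
    have hU : (Finset.univ.filter (fun j : {i // i ∈ R} => (x j.1 : ℝ) = g j.1))
        ∪ (Finset.univ.filter (fun j : {i // i ∈ R} => ¬ ((x j.1 : ℝ) = g j.1)))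
        = Finset.univ := Finset.filter_union_filter_not_eq _ _
    have hD : Disjoint (Finset.univ.filter (fun j : {i // i ∈ R} => (x j.1 : ℝ) = g j.1))
        (Finset.univ.filter (fun j : {i // i ∈ R} => ¬ ((x j.1 : ℝ) = g j.1))) :=
      Finset.disjoint_filter_filter_not _ _ _
    obtain ⟨i0, hi0⟩ := hP
    obtain ⟨i1, hi1⟩ := hM
    have hP'ne : (Finset.univ.filter (fun j : {i // i ∈ R} => (x j.1 : ℝ) = g j.1)).Nonempty :=
      ⟨⟨i0, (Finset.mem_filter.1 hi0).1⟩,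
        Finset.mem_filter.2 ⟨Finset.mem_univ _, (Finset.mem_filter.1 hi0).2⟩⟩
    have hM'ne : (Finset.univ.filter (fun j : {i // i ∈ R} => ¬ ((x j.1 : ℝ) = g j.1))).Nonempty :=
      ⟨⟨i1, (Finset.mem_filter.1 hi1).1⟩,
        Finset.mem_filter.2 ⟨Finset.mem_univ _, (Finset.mem_filter.1 hi1).2⟩⟩
    have hconvP : ∀ i : {i // i ∈ R},
        ∑ j ∈ Finset.univ.filter (fun j : {i // i ∈ R} => (x j.1 : ℝ) = g j.1),
          |(τ i : ℝ) * W i.1 j.1 * (τ j : ℝ)|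
        = ∑ j ∈ R.filter (fun j => (x j : ℝ) = g j), g i.1 * W i.1 j * g j := by
      intro i
      rw [Finset.sum_congr rfl (fun j _ => habs_prod' i j)]
      exact SNCAux.sum_subtype_filter R (fun j => (x j : ℝ) = g j) (fun j => g i.1 * W i.1 j * g j)
    have hconvM : ∀ i : {i // i ∈ R},
        ∑ j ∈ Finset.univ.filter (fun j : {i // i ∈ R} => ¬ ((x j.1 : ℝ) = g j.1)),
          |(τ i : ℝ) * W i.1 j.1 * (τ j : ℝ)|
        = ∑ j ∈ R.filter (fun j => ¬ ((x j : ℝ) = g j)), g i.1 * W i.1 j * g j := by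
      intro i
      rw [Finset.sum_congr rfl (fun j _ => habs_prod' i j)]
      exact SNCAux.sum_subtype_filter R (fun j => ¬ ((x j : ℝ) = g j))
        (fun j => g i.1 * W i.1 j * g j)
    rcases hind _ _ hU hD hP'ne hM'ne with ⟨i, hiP, hlt⟩ | ⟨i, hiM, hlt⟩
    · refine ⟨i.1, Finset.mem_filter.2 ⟨i.2, (Finset.mem_filter.1 hiP).2⟩, ?_⟩
      simp only [] at hlt
      rw [hconvP i, hconvM i, ← hgR' i] at hlt
      rw [hdecompR x i.1 i.2]
      have hb : g i.1 * ∑ j ∈ S, W i.1 j * (x j : ℝ) ≤ ∑ j ∈ S, |W i.1 j| := by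
        calc g i.1 * ∑ j ∈ S, W i.1 j * (x j : ℝ)
            ≤ |g i.1 * ∑ j ∈ S, W i.1 j * (x j : ℝ)| := le_abs_self _
          _ = |∑ j ∈ S, W i.1 j * (x j : ℝ)| := by rw [abs_mul, habsg, one_mul]
          _ ≤ ∑ j ∈ S, |W i.1 j| := hSbound x i.1
      linarith
    · exfalso
      have hcord := hcoh i.1 (Finset.mem_filter.2 ⟨i.2, (Finset.mem_filter.1 hiM).2⟩)
      simp only [] at hlt
      rw [hconvP i, hconvM i, ← hgR' i] at hlt
      rw [hdecompR x i.1 i.2] at hcord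
      have h1 : |g i.1 * ∑ j ∈ S, W i.1 j * (x j : ℝ)|
          = |∑ j ∈ S, W i.1 j * (x j : ℝ)| := by rw [abs_mul, habsg, one_mul]
      have h3 := neg_abs_le (g i.1 * ∑ j ∈ S, W i.1 j * (x j : ℝ))
      have h2 := hSbound x i.1
      linarith
  -- Phase A, up
  have phaseAup : ∀ x0 : V → Act, ∃ x1 : V → Act,
      (∀ i ∈ R.filter (fun j => ¬ ((x1 j : ℝ) = g j)), g i * SNCAux.dfun W h x1 i < 0) ∧
      Relation.ReflTransGen (BRStep W h) x0 x1 := by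
    intro x0
    have step : ∀ x : V → Act, True →
        ¬ (∀ i ∈ R.filter (fun j => ¬ ((x j : ℝ) = g j)), g i * SNCAux.dfun W h x i < 0) →
        ∃ y, BRStep W h x y ∧ True ∧
          (R.filter (fun j => ¬ ((y j : ℝ) = g j))).card
            < (R.filter (fun j => ¬ ((x j : ℝ) = g j))).card := by
      intro x _ hQx
      push_neg at hQx
      obtain ⟨i, hiM, hge⟩ := hQx
      have hiR := (Finset.mem_filter.1 hiM).1
      have hxi : (x i : ℝ) = -g i := hmis x i (Finset.mem_filter.1 hiM).2
      refine ⟨Function.update x i (actNeg (x i)), SNCAux.brStep_flip W h hdiag x i ?_, trivial, ?_⟩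
      · rw [hxi]; linarith
      · exact SNCAux.filter_update_card_lt R (fun j a => ¬ ((a : ℝ) = g j)) x i (actNeg (x i))
          hiR (Finset.mem_filter.1 hiM).2
          (fun hc => hc (by rw [SNCAux.actNeg_coe, hxi]; ring))
    obtain ⟨y, _, hQ, hr⟩ := SNCAux.reach W h (fun _ => True)
      (fun x => ∀ i ∈ R.filter (fun j => ¬ ((x j : ℝ) = g j)), g i * SNCAux.dfun W h x i < 0)
      (fun x => (R.filter (fun j => ¬ ((x j : ℝ) = g j))).card) step x0 trivial
    exact ⟨y, hQ, hr⟩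
  -- Phase A, down
  have phaseAdown : ∀ x0 : V → Act,
      (R.filter (fun j => ¬ ((x0 j : ℝ) = g j))).Nonempty →
      (∀ i ∈ R.filter (fun j => ¬ ((x0 j : ℝ) = g j)), g i * SNCAux.dfun W h x0 i < 0) →
      ∃ x1 : V → Act, (∀ i ∈ R, (x1 i : ℝ) = -g i) ∧
        Relation.ReflTransGen (BRStep W h) x0 x1 := by
    intro x0 hM0 hcoh0
    have step : ∀ x : V → Act,
        ((R.filter (fun j => ¬ ((x j : ℝ) = g j))).Nonempty ∧
          (∀ i ∈ R.filter (fun j => ¬ ((x j : ℝ) = g j)), g i * SNCAux.dfun W h x i < 0)) →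
        ¬ (R.filter (fun j => (x j : ℝ) = g j) = ∅) →
        ∃ y, BRStep W h x y ∧
          ((R.filter (fun j => ¬ ((y j : ℝ) = g j))).Nonempty ∧
            (∀ i ∈ R.filter (fun j => ¬ ((y j : ℝ) = g j)), g i * SNCAux.dfun W h y i < 0)) ∧
          (R.filter (fun j => (y j : ℝ) = g j)).card
            < (R.filter (fun j => (x j : ℝ) = g j)).card := by
      intro x hIx hQx
      obtain ⟨hMne, hcoh⟩ := hIx
      obtain ⟨i, hiP, hlt⟩ := keyA x (Finset.nonempty_iff_ne_empty.2 hQx) hMne hcoh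
      have hiR := (Finset.mem_filter.1 hiP).1
      have hxi : (x i : ℝ) = g i := (Finset.mem_filter.1 hiP).2
      refine ⟨Function.update x i (actNeg (x i)), SNCAux.brStep_flip W h hdiag x i ?_, ⟨?_, ?_⟩, ?_⟩
      · rw [hxi]; linarith
      · -- new misaligned set nonempty : i itself
        refine ⟨i, Finset.mem_filter.2 ⟨hiR, ?_⟩⟩
        rw [Function.update_self, SNCAux.actNeg_coe, hxi]
        exact hgne i
      · -- cohesiveness preserved
        intro k hk
        obtain ⟨hkR, hky⟩ := Finset.mem_filter.1 hk
        by_cases hki : k = i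
        · subst hki
          rw [SNCAux.dfun_update, hdiag, zero_mul, add_zero]
          exact hlt
        · rw [Function.update_of_ne hki] at hky
          have hc := hcoh k (Finset.mem_filter.2 ⟨hkR, hky⟩)
          rw [SNCAux.dfun_update, SNCAux.actNeg_coe, hxi]
          have := hgRR k i hkR hiR
          nlinarith
      · exact SNCAux.filter_update_card_lt R (fun j a => (a : ℝ) = g j) x i (actNeg (x i))
          hiR hxi (by intro hc; simp only [SNCAux.actNeg_coe, hxi] at hc; exact hgne i hc)
    obtain ⟨y, _, hQ, hr⟩ := SNCAux.reach W h
      (fun x => (R.filter (fun j => ¬ ((x j : ℝ) = g j))).Nonempty ∧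
        (∀ i ∈ R.filter (fun j => ¬ ((x j : ℝ) = g j)), g i * SNCAux.dfun W h x i < 0))
      (fun x => R.filter (fun j => (x j : ℝ) = g j) = ∅)
      (fun x => (R.filter (fun j => (x j : ℝ) = g j)).card) step x0 ⟨hM0, hcoh0⟩
    refine ⟨y, fun i hi => ?_, hr⟩
    exact hmis y i (Finset.filter_eq_empty_iff.1 hQ hi)
  -- consensus lock on R
  have lockR : ∀ (c : ℝ), (c = 1 ∨ c = -1) → ∀ x : V → Act,
      (∀ i ∈ R, (x i : ℝ) = c * g i) → ∀ i ∈ R, 0 < (x i : ℝ) * SNCAux.dfun W h x i := by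
    intro c hc x hx i hi
    rw [hsplit x i]
    have eR : (x i : ℝ) * ∑ j ∈ R, W i j * (x j : ℝ) = ∑ j ∈ R, |W i j| := by
      rw [Finset.mul_sum]
      refine Finset.sum_congr rfl fun j hj => ?_
      rw [hx i hi, hx j hj, ← habs_prod i j hi hj]
      rcases hc with rfl | rfl <;> ring
    have h1 : -|h i| ≤ (x i : ℝ) * h i := by
      have h5 := neg_abs_le ((x i : ℝ) * h i)
      rw [abs_mul, SNCAux.act_abs, one_mul] at h5
      exact h5
    have h2 : -(∑ j ∈ S, |W i j|) ≤ (x i : ℝ) * ∑ j ∈ S, W i j * (x j : ℝ) := by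
      have h3 := neg_abs_le ((x i : ℝ) * ∑ j ∈ S, W i j * (x j : ℝ))
      rw [abs_mul, SNCAux.act_abs, one_mul] at h3
      have h6 := hSbound x i
      linarith
    have h4 := hdeg i hi
    have e5 : (x i : ℝ) * (h i + (∑ j ∈ R, W i j * (x j : ℝ)) + ∑ j ∈ S, W i j * (x j : ℝ))
        = (x i : ℝ) * h i + (x i : ℝ) * ∑ j ∈ R, W i j * (x j : ℝ)
          + (x i : ℝ) * ∑ j ∈ S, W i j * (x j : ℝ) := by ring
    rw [e5, eR]
    linarith
  -- Phase B, up
  have phaseBup : ∀ (c : ℝ) (x0 : V → Act), (∀ i ∈ R, (x0 i : ℝ) = c * g i) →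
      ∃ x1 : V → Act, (∀ i ∈ R, (x1 i : ℝ) = c * g i) ∧
        (∀ j ∈ S.filter (fun j => ¬ ((x1 j : ℝ) = g j)), g j * SNCAux.dfun W h x1 j < 0) ∧
        Relation.ReflTransGen (BRStep W h) x0 x1 := by
    intro c x0 hcon0
    have step : ∀ x : V → Act, (∀ i ∈ R, (x i : ℝ) = c * g i) →
        ¬ (∀ j ∈ S.filter (fun j => ¬ ((x j : ℝ) = g j)), g j * SNCAux.dfun W h x j < 0) →
        ∃ y, BRStep W h x y ∧ (∀ i ∈ R, (y i : ℝ) = c * g i) ∧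
          (S.filter (fun j => ¬ ((y j : ℝ) = g j))).card
            < (S.filter (fun j => ¬ ((x j : ℝ) = g j))).card := by
      intro x hIx hQx
      push_neg at hQx
      obtain ⟨j, hjM, hge⟩ := hQx
      have hjS := (Finset.mem_filter.1 hjM).1
      have hxj : (x j : ℝ) = -g j := hmis x j (Finset.mem_filter.1 hjM).2
      refine ⟨Function.update x j (actNeg (x j)), SNCAux.brStep_flip W h hdiag x j ?_, ?_, ?_⟩
      · rw [hxj]; linarith
      · intro i hi
        rw [Function.update_of_ne (fun hij => hSnotR j hjS (by rw [← hij]; exact hi))]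
        exact hIx i hi
      · exact SNCAux.filter_update_card_lt S (fun j' a => ¬ ((a : ℝ) = g j')) x j (actNeg (x j))
          hjS (Finset.mem_filter.1 hjM).2
          (fun hc => hc (by rw [SNCAux.actNeg_coe, hxj]; ring))
    obtain ⟨y, hI, hQ, hr⟩ := SNCAux.reach W h (fun x => ∀ i ∈ R, (x i : ℝ) = c * g i)
      (fun x => ∀ j ∈ S.filter (fun j => ¬ ((x j : ℝ) = g j)), g j * SNCAux.dfun W h x j < 0)
      (fun x => (S.filter (fun j => ¬ ((x j : ℝ) = g j))).card) step x0 hcon0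
    exact ⟨y, hI, hQ, hr⟩
  -- Phase B, down
  have phaseBdown : ∀ (c : ℝ) (x0 : V → Act), (∀ i ∈ R, (x0 i : ℝ) = c * g i) →
      (∀ j ∈ S.filter (fun j => ¬ ((x0 j : ℝ) = g j)), g j * SNCAux.dfun W h x0 j ≤ 0) →
      ∃ x1 : V → Act, (∀ i ∈ R, (x1 i : ℝ) = c * g i) ∧
        (∀ j ∈ S.filter (fun j => ¬ ((x1 j : ℝ) = g j)), g j * SNCAux.dfun W h x1 j ≤ 0) ∧
        (∀ j ∈ S.filter (fun j => (x1 j : ℝ) = g j), 0 < g j * SNCAux.dfun W h x1 j) ∧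
        Relation.ReflTransGen (BRStep W h) x0 x1 := by
    intro c x0 hcon0 hmis0
    have step : ∀ x : V → Act,
        ((∀ i ∈ R, (x i : ℝ) = c * g i) ∧
          (∀ j ∈ S.filter (fun j => ¬ ((x j : ℝ) = g j)), g j * SNCAux.dfun W h x j ≤ 0)) →
        ¬ (∀ j ∈ S.filter (fun j => (x j : ℝ) = g j), 0 < g j * SNCAux.dfun W h x j) →
        ∃ y, BRStep W h x y ∧
          ((∀ i ∈ R, (y i : ℝ) = c * g i) ∧
            (∀ j ∈ S.filter (fun j => ¬ ((y j : ℝ) = g j)), g j * SNCAux.dfun W h y j ≤ 0)) ∧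
          (S.filter (fun j => (y j : ℝ) = g j)).card
            < (S.filter (fun j => (x j : ℝ) = g j)).card := by
      intro x hIx hQx
      obtain ⟨hconx, hmisx⟩ := hIx
      push_neg at hQx
      obtain ⟨j, hjP, hle⟩ := hQx
      have hjS := (Finset.mem_filter.1 hjP).1
      have hxj : (x j : ℝ) = g j := (Finset.mem_filter.1 hjP).2
      refine ⟨Function.update x j (actNeg (x j)), SNCAux.brStep_flip W h hdiag x j ?_, ⟨?_, ?_⟩, ?_⟩
      · rw [hxj]; linarith
      · intro i hi
        rw [Function.update_of_ne (fun hij => hSnotR j hjS (by rw [← hij]; exact hi))]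
        exact hconx i hi
      · intro k hk
        obtain ⟨hkS, hky⟩ := Finset.mem_filter.1 hk
        by_cases hkj : k = j
        · subst hkj
          rw [SNCAux.dfun_update, hdiag, zero_mul, add_zero]
          exact hle
        · rw [Function.update_of_ne hkj] at hky
          have hc := hmisx k (Finset.mem_filter.2 ⟨hkS, hky⟩)
          rw [SNCAux.dfun_update, SNCAux.actNeg_coe, hxj]
          have := hgSS k j hkS hjS
          nlinarith
      · exact SNCAux.filter_update_card_lt S (fun j' a => (a : ℝ) = g j') x j (actNeg (x j))
          hjS hxj (by intro hc; simp only [SNCAux.actNeg_coe, hxj] at hc; exact hgne j hc)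
    obtain ⟨y, hI, hQ, hr⟩ := SNCAux.reach W h
      (fun x => (∀ i ∈ R, (x i : ℝ) = c * g i) ∧
        (∀ j ∈ S.filter (fun j => ¬ ((x j : ℝ) = g j)), g j * SNCAux.dfun W h x j ≤ 0))
      (fun x => ∀ j ∈ S.filter (fun j => (x j : ℝ) = g j), 0 < g j * SNCAux.dfun W h x j)
      (fun x => (S.filter (fun j => (x j : ℝ) = g j)).card) step x0 ⟨hcon0, hmis0⟩
    exact ⟨y, hI.1, hI.2, hQ, hr⟩
  -- main reachability
  have main : GloballyBRReachable W h
      {x : V → Act | IsNash W h x ∧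
        ((∀ i : {i // i ∈ R}, x i.1 = τ i) ∨ (∀ i : {i // i ∈ R}, x i.1 = actNeg (τ i)))} := by
    intro x0
    have afterA : ∀ (c : ℝ), (c = 1 ∨ c = -1) → ∀ x2 : V → Act,
        (∀ i ∈ R, (x2 i : ℝ) = c * g i) →
        Relation.ReflTransGen (BRStep W h) x0 x2 →
        ∃ y ∈ {x : V → Act | IsNash W h x ∧
          ((∀ i : {i // i ∈ R}, x i.1 = τ i) ∨ (∀ i : {i // i ∈ R}, x i.1 = actNeg (τ i)))},
          Relation.ReflTransGen (BRStep W h) x0 y := by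
      intro c hc x2 hcon2 hr12
      obtain ⟨x3, hcon3, hstuck3, hr3⟩ := phaseBup c x2 hcon2
      obtain ⟨x4, hcon4, hmis4, hpos4, hr4⟩ :=
        phaseBdown c x3 hcon3 (fun j hj => le_of_lt (hstuck3 j hj))
      refine ⟨x4, ⟨?_, ?_⟩, hr12.trans (hr3.trans hr4)⟩
      · intro i
        rw [SNCAux.mem_bestResponse_iff W h hdiag]
        by_cases hiR : i ∈ R
        · exact le_of_lt (lockR c hc x4 hcon4 i hiR)
        · have hiS : i ∈ S := (hRorS i).resolve_left hiR
          by_cases hal : (x4 i : ℝ) = g i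
          · have := hpos4 i (Finset.mem_filter.2 ⟨hiS, hal⟩)
            rw [hal]
            exact le_of_lt this
          · have h1 := hmis4 i (Finset.mem_filter.2 ⟨hiS, hal⟩)
            rw [hmis x4 i hal]
            linarith
      · rcases hc with rfl | rfl
        · left
          intro i
          apply Subtype.ext
          have := hcon4 i.1 i.2
          rw [one_mul, hgR' i] at this
          exact this
        · right
          intro i
          apply Subtype.ext
          show (x4 i.1 : ℝ) = ((actNeg (τ i) : Act) : ℝ)
          rw [SNCAux.actNeg_coe, ← hgR' i]
          have := hcon4 i.1 i.2
          rw [this]; ring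
    obtain ⟨x1, hQ1, hr1⟩ := phaseAup x0
    by_cases hM1 : R.filter (fun j => ¬ ((x1 j : ℝ) = g j)) = ∅
    · have hcon1 : ∀ i ∈ R, (x1 i : ℝ) = 1 * g i := by
        intro i hi
        have := Finset.filter_eq_empty_iff.1 hM1 hi
        rw [one_mul]
        exact not_not.1 this
      exact afterA 1 (Or.inl rfl) x1 hcon1 hr1
    · obtain ⟨x2, hcon2', hr2⟩ := phaseAdown x1 (Finset.nonempty_iff_ne_empty.2 hM1) hQ1
      have hcon2 : ∀ i ∈ R, (x2 i : ℝ) = (-1) * g i := by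
        intro i hi; rw [hcon2' i hi]; ring
      exact afterA (-1) (Or.inr rfl) x2 hcon2 (hr1.trans hr2)
  refine ⟨?_, main⟩
  obtain ⟨y, hy, _⟩ := main (fun _ => onePt)
  exact ⟨y, hy⟩
end
end

section
/- Consider the signed network coordination game on a network (V, W) with external field h and a partition V = R ∪ S (R, S disjoint) such that the subnetwork (R, W_{RR}) is structurally balanced and the matrix W_{SS} is symmetric. Let τ ∈ {−1,+1}^R be such that τ_i W_ij τ_j ≥ 0 for all i, j ∈ R, and let h^+, h^− ∈ ℝ^R be defined by h^+_i = τ_i h_i + w_i^S and h^−_i = τ_i h_i − w_i^S for i ∈ R. If the τ-transformed subnetwork (R, W^[τ]_{RR}) with entries τ_i W_ij τ_j is (h^−, h^+)-indecomposable and w_i^R − |h_i| > w_i^S for every i ∈ R, then there exists a nonempty globally BR-stable subset of the set of Nash equilibria of the SNC game. -/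
open Finset Function

noncomputable section

set_option linter.unusedSectionVars false

namespace SNC18

instance : Fintype Act :=
  ⟨{onePt, negOnePt}, by
    rintro ⟨r, hr | hr⟩ <;> simp [onePt, negOnePt, Subtype.ext_iff, hr]⟩

variable {V : Type*} [Fintype V] [DecidableEq V]

lemma act_eq_or (a b : Act) : b = a ∨ (b : ℝ) = -(a : ℝ) := by
  rcases a.2 with h1 | h1 <;> rcases b.2 with h2 | h2
  · exact Or.inl (Subtype.ext (h2.trans h1.symm))
  · exact Or.inr (by simp [h1, h2])
  · exact Or.inr (by simp [h1, h2])
  · exact Or.inl (Subtype.ext (h2.trans h1.symm))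

lemma act_abs (a : Act) : |(a : ℝ)| = 1 := by
  rcases a.2 with h | h <;> rw [h] <;> norm_num

def F (W : V → V → ℝ) (h : V → ℝ) (i : V) (x : V → Act) : ℝ :=
  h i + ∑ j, W i j * (x j : ℝ)

variable {W : V → V → ℝ} {h : V → ℝ}

lemma util_update (hdiag : ∀ i, W i i = 0) (i : V) (x : V → Act) (a : Act) :
    utility W h i (Function.update x i a) = (a : ℝ) * F W h i x := by
  unfold utility F
  rw [Function.update_self]
  have e : ∑ j, W i j * ((Function.update x i a j : Act) : ℝ) = ∑ j, W i j * (x j : ℝ) := by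
    refine Finset.sum_congr rfl fun j _ => ?_
    by_cases hj : j = i
    · subst hj; rw [hdiag]; ring
    · rw [Function.update_of_ne hj]
  rw [e]; ring

lemma mem_br_iff (hdiag : ∀ i, W i i = 0) {i : V} {x : V → Act} {a : Act} :
    a ∈ bestResponse W h i x ↔ ∀ b : Act, (b : ℝ) * F W h i x ≤ (a : ℝ) * F W h i x := by
  unfold bestResponse
  simp only [Set.mem_setOf_eq, util_update hdiag]

lemma mem_br_of_nonneg (hdiag : ∀ i, W i i = 0) {i : V} {x : V → Act} {a : Act}
    (ha : 0 ≤ (a : ℝ) * F W h i x) : a ∈ bestResponse W h i x := by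
  rw [mem_br_iff hdiag]
  intro b
  rcases act_eq_or a b with rfl | hb
  · exact le_rfl
  · rw [hb]; linarith

lemma eq_update_self {x y : V → Act} {i : V} (hoff : ∀ j, j ≠ i → y j = x j) :
    y = Function.update x i (y i) := by
  funext j
  by_cases hj : j = i
  · subst hj; rw [Function.update_self]
  · rw [Function.update_of_ne hj, hoff j hj]

lemma F_update (j i : V) (x : V → Act) (a : Act) :
    F W h j (Function.update x i a) = F W h j x + W j i * ((a : ℝ) - (x i : ℝ)) := by
  unfold F
  rw [← Finset.add_sum_erase _ (fun k => W j k * ((Function.update x i a k : Act) : ℝ))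
      (Finset.mem_univ i),
    ← Finset.add_sum_erase _ (fun k => W j k * (x k : ℝ)) (Finset.mem_univ i)]
  rw [Function.update_self]
  have e : ∑ k ∈ Finset.univ.erase i, W j k * ((Function.update x i a k : Act) : ℝ)
      = ∑ k ∈ Finset.univ.erase i, W j k * (x k : ℝ) := by
    refine Finset.sum_congr rfl fun k hk => ?_
    rw [Function.update_of_ne (Finset.ne_of_mem_erase hk)]
  rw [e]; ring

lemma mk_step (hdiag : ∀ i, W i i = 0) {x : V → Act} {i : V} (a : Act)
    (hne : (a : ℝ) ≠ (x i : ℝ)) (hbr : 0 ≤ (a : ℝ) * F W h i x) :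
    BRStep W h x (Function.update x i a) := by
  refine ⟨i, fun j hj => Function.update_of_ne hj a x, ?_, ?_⟩
  · rw [Function.update_self]; exact fun e => hne (by rw [e])
  · rw [Function.update_self]; exact mem_br_of_nonneg hdiag hbr

def Phi (W : V → V → ℝ) (h : V → ℝ) (S : Finset V) (x : V → Act) : ℝ :=
  2 * ∑ i ∈ S, (x i : ℝ) * F W h i x - ∑ i ∈ S, ∑ j ∈ S, W i j * (x i : ℝ) * (x j : ℝ)

lemma phi_step {S : Finset V} (hdiag : ∀ i, W i i = 0)
    (hsym : ∀ i ∈ S, ∀ j ∈ S, W i j = W j i) {i : V} (hi : i ∈ S) (x : V → Act) (a : Act) :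
    Phi W h S (Function.update x i a)
      = Phi W h S x + 2 * ((a : ℝ) - (x i : ℝ)) * F W h i x := by
  set x' : V → Act := Function.update x i a with hx'def
  have hx'i : x' i = a := Function.update_self i a x
  have hx'j : ∀ j, j ≠ i → x' j = x j := fun j hj => Function.update_of_ne hj a x
  have hFup : ∀ j, F W h j x' = F W h j x + W j i * ((a : ℝ) - (x i : ℝ)) :=
    fun j => F_update j i x a
  have hFi : F W h i x' = F W h i x := by rw [hFup i, hdiag]; ring
  have e1 : ∑ k ∈ S, (x' k : ℝ) * F W h k x'
      = (a : ℝ) * F W h i x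
        + (∑ k ∈ S.erase i, (x k : ℝ) * F W h k x
           + ((a : ℝ) - (x i : ℝ)) * ∑ k ∈ S.erase i, W k i * (x k : ℝ)) := by
    rw [← Finset.add_sum_erase S (fun k => (x' k : ℝ) * F W h k x') hi, hx'i, hFi]
    congr 1
    rw [Finset.mul_sum, ← Finset.sum_add_distrib]
    refine Finset.sum_congr rfl fun k hk => ?_
    rw [hx'j k (Finset.ne_of_mem_erase hk), hFup k]
    ring
  have e1' : ∑ k ∈ S, (x k : ℝ) * F W h k x
      = (x i : ℝ) * F W h i x + ∑ k ∈ S.erase i, (x k : ℝ) * F W h k x :=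
    (Finset.add_sum_erase S (fun k => (x k : ℝ) * F W h k x) hi).symm
  have key : ∀ y : V → Act,
      ∑ k ∈ S, ∑ j ∈ S, W k j * (y k : ℝ) * (y j : ℝ)
        = W i i * (y i : ℝ) * (y i : ℝ)
          + (∑ j ∈ S.erase i, W i j * (y i : ℝ) * (y j : ℝ))
          + (∑ k ∈ S.erase i, W k i * (y k : ℝ) * (y i : ℝ))
          + ∑ k ∈ S.erase i, ∑ j ∈ S.erase i, W k j * (y k : ℝ) * (y j : ℝ) := by
    intro y
    rw [← Finset.add_sum_erase S (fun k => ∑ j ∈ S, W k j * (y k : ℝ) * (y j : ℝ)) hi,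
      ← Finset.add_sum_erase S (fun j => W i j * (y i : ℝ) * (y j : ℝ)) hi]
    have inner : ∀ k ∈ S.erase i,
        ∑ j ∈ S, W k j * (y k : ℝ) * (y j : ℝ)
          = W k i * (y k : ℝ) * (y i : ℝ) + ∑ j ∈ S.erase i, W k j * (y k : ℝ) * (y j : ℝ) :=
      fun k _ => (Finset.add_sum_erase S (fun j => W k j * (y k : ℝ) * (y j : ℝ)) hi).symm
    rw [Finset.sum_congr rfl inner, Finset.sum_add_distrib]
    ring
  have e2' : ∑ k ∈ S, ∑ j ∈ S, W k j * (x' k : ℝ) * (x' j : ℝ)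
      = (a : ℝ) * (∑ j ∈ S.erase i, W i j * (x j : ℝ))
        + (a : ℝ) * (∑ k ∈ S.erase i, W k i * (x k : ℝ))
        + ∑ k ∈ S.erase i, ∑ j ∈ S.erase i, W k j * (x k : ℝ) * (x j : ℝ) := by
    rw [key x', hx'i, hdiag i]
    have q1 : ∑ j ∈ S.erase i, W i j * (a : ℝ) * (x' j : ℝ)
        = (a : ℝ) * ∑ j ∈ S.erase i, W i j * (x j : ℝ) := by
      rw [Finset.mul_sum]
      refine Finset.sum_congr rfl fun j hj => ?_
      rw [hx'j j (Finset.ne_of_mem_erase hj)]; ring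
    have q2 : ∑ k ∈ S.erase i, W k i * (x' k : ℝ) * (a : ℝ)
        = (a : ℝ) * ∑ k ∈ S.erase i, W k i * (x k : ℝ) := by
      rw [Finset.mul_sum]
      refine Finset.sum_congr rfl fun k hk => ?_
      rw [hx'j k (Finset.ne_of_mem_erase hk)]; ring
    have q3 : ∑ k ∈ S.erase i, ∑ j ∈ S.erase i, W k j * (x' k : ℝ) * (x' j : ℝ)
        = ∑ k ∈ S.erase i, ∑ j ∈ S.erase i, W k j * (x k : ℝ) * (x j : ℝ) := by
      refine Finset.sum_congr rfl fun k hk => Finset.sum_congr rfl fun j hj => ?_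
      rw [hx'j k (Finset.ne_of_mem_erase hk), hx'j j (Finset.ne_of_mem_erase hj)]
    rw [q1, q2, q3]; ring
  have e3' : ∑ k ∈ S, ∑ j ∈ S, W k j * (x k : ℝ) * (x j : ℝ)
      = (x i : ℝ) * (∑ j ∈ S.erase i, W i j * (x j : ℝ))
        + (x i : ℝ) * (∑ k ∈ S.erase i, W k i * (x k : ℝ))
        + ∑ k ∈ S.erase i, ∑ j ∈ S.erase i, W k j * (x k : ℝ) * (x j : ℝ) := by
    rw [key x, hdiag i]
    have q1 : ∑ j ∈ S.erase i, W i j * (x i : ℝ) * (x j : ℝ)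
        = (x i : ℝ) * ∑ j ∈ S.erase i, W i j * (x j : ℝ) := by
      rw [Finset.mul_sum]
      exact Finset.sum_congr rfl fun j hj => by ring
    have q2 : ∑ k ∈ S.erase i, W k i * (x k : ℝ) * (x i : ℝ)
        = (x i : ℝ) * ∑ k ∈ S.erase i, W k i * (x k : ℝ) := by
      rw [Finset.mul_sum]
      exact Finset.sum_congr rfl fun k hk => by ring
    rw [q1, q2]; ring
  have rsym : ∑ k ∈ S.erase i, W k i * (x k : ℝ) = ∑ k ∈ S.erase i, W i k * (x k : ℝ) :=
    Finset.sum_congr rfl fun k hk => by rw [hsym k (Finset.mem_of_mem_erase hk) i hi]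
  unfold Phi
  rw [e1, e2', e1', e3', rsym]
  ring

def Pf (R : Finset V) (τ' : V → ℝ) (x : V → Act) : Finset V :=
  R.filter fun i => τ' i * (x i : ℝ) = 1

def Mf (R : Finset V) (τ' : V → ℝ) (x : V → Act) : Finset V :=
  R.filter fun i => τ' i * (x i : ℝ) = -1

def Cons (R : Finset V) (τ' : V → ℝ) (x : V → Act) : Prop :=
  (∀ i ∈ R, τ' i * (x i : ℝ) = 1) ∨ (∀ i ∈ R, τ' i * (x i : ℝ) = -1)

variable {R S : Finset V} {τ' : V → ℝ}

lemma tau_sq (hτ1 : ∀ i, τ' i = 1 ∨ τ' i = -1) (i : V) : τ' i * τ' i = 1 := by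
  rcases hτ1 i with e | e <;> rw [e] <;> norm_num

lemma tau_abs (hτ1 : ∀ i, τ' i = 1 ∨ τ' i = -1) (i : V) : |τ' i| = 1 := by
  rcases hτ1 i with e | e <;> rw [e] <;> norm_num

lemma PM_union (hτ1 : ∀ i, τ' i = 1 ∨ τ' i = -1) (x : V → Act) :
    Pf R τ' x ∪ Mf R τ' x = R := by
  ext i
  simp only [Finset.mem_union, Pf, Mf, Finset.mem_filter]
  constructor
  · rintro (⟨h1, -⟩ | ⟨h1, -⟩) <;> exact h1
  · intro hiR
    rcases hτ1 i with e | e <;> rcases (x i).2 with e2 | e2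
    · exact Or.inl ⟨hiR, by rw [e, e2]; norm_num⟩
    · exact Or.inr ⟨hiR, by rw [e, e2]; norm_num⟩
    · exact Or.inr ⟨hiR, by rw [e, e2]; norm_num⟩
    · exact Or.inl ⟨hiR, by rw [e, e2]; norm_num⟩

lemma PM_disj (x : V → Act) : Disjoint (Pf R τ' x) (Mf R τ' x) := by
  rw [Finset.disjoint_left]
  intro i h1 h2
  have e1 := (Finset.mem_filter.mp h1).2
  have e2 := (Finset.mem_filter.mp h2).2
  rw [e1] at e2
  norm_num at e2

lemma xval_P (hτ1 : ∀ i, τ' i = 1 ∨ τ' i = -1) {x : V → Act} {i : V}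
    (hi : i ∈ Pf R τ' x) : (x i : ℝ) = τ' i := by
  have h1 := (Finset.mem_filter.mp hi).2
  rcases hτ1 i with e | e <;> rw [e] at h1 ⊢ <;> linarith

lemma xval_M (hτ1 : ∀ i, τ' i = 1 ∨ τ' i = -1) {x : V → Act} {i : V}
    (hi : i ∈ Mf R τ' x) : (x i : ℝ) = -τ' i := by
  have h1 := (Finset.mem_filter.mp hi).2
  rcases hτ1 i with e | e <;> rw [e] at h1 ⊢ <;> linarith

lemma consPos (hτ1 : ∀ i, τ' i = 1 ∨ τ' i = -1) {x : V → Act}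
    (hM : Mf R τ' x = ∅) : Cons R τ' x := by
  left
  intro i hiR
  have hmem : i ∈ Pf R τ' x ∪ Mf R τ' x := (PM_union hτ1 x).symm ▸ hiR
  rw [hM, Finset.union_empty] at hmem
  exact (Finset.mem_filter.mp hmem).2

lemma consNeg (hτ1 : ∀ i, τ' i = 1 ∨ τ' i = -1) {x : V → Act}
    (hP : Pf R τ' x = ∅) : Cons R τ' x := by
  right
  intro i hiR
  have hmem : i ∈ Pf R τ' x ∪ Mf R τ' x := (PM_union hτ1 x).symm ▸ hiR
  rw [hP, Finset.empty_union] at hmem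
  exact (Finset.mem_filter.mp hmem).2

lemma tauS_bound (hτ1 : ∀ i, τ' i = 1 ∨ τ' i = -1) (S : Finset V) (x : V → Act) (i : V) :
    |τ' i * ∑ j ∈ S, W i j * (x j : ℝ)| ≤ ∑ j ∈ S, |W i j| := by
  rw [abs_mul, tau_abs hτ1, one_mul]
  calc |∑ j ∈ S, W i j * (x j : ℝ)| ≤ ∑ j ∈ S, |W i j * (x j : ℝ)| :=
        Finset.abs_sum_le_sum_abs _ _
    _ = ∑ j ∈ S, |W i j| := Finset.sum_congr rfl fun j _ => by
        rw [abs_mul, act_abs, mul_one]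

lemma keyR (hτ1 : ∀ i, τ' i = 1 ∨ τ' i = -1)
    (hττ : ∀ i ∈ R, ∀ j ∈ R, 0 ≤ τ' i * W i j * τ' j)
    (hUnion : R ∪ S = Finset.univ) (hDisj : Disjoint R S)
    {x : V → Act} {i : V} (hiR : i ∈ R) {A B : Finset V}
    (hAB : A ∪ B = R) (hd : Disjoint A B)
    (hA : ∀ j ∈ A, (x j : ℝ) = τ' j) (hB : ∀ j ∈ B, (x j : ℝ) = -τ' j) :
    τ' i * F W h i x
      = τ' i * h i + ∑ j ∈ A, |W i j| - ∑ j ∈ B, |W i j|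
        + τ' i * ∑ j ∈ S, W i j * (x j : ℝ) := by
  have habs : ∀ j ∈ R, τ' i * W i j * τ' j = |W i j| := by
    intro j hj
    have h0 := hττ i hiR j hj
    have h1 : |τ' i * W i j * τ' j| = |W i j| := by
      rw [abs_mul, abs_mul, tau_abs hτ1, tau_abs hτ1, one_mul, mul_one]
    rw [← h1, abs_of_nonneg h0]
  have hAR : A ⊆ R := hAB ▸ Finset.subset_union_left
  have hBR : B ⊆ R := hAB ▸ Finset.subset_union_right
  have eA : ∑ j ∈ A, |W i j| = ∑ j ∈ A, τ' i * (W i j * (x j : ℝ)) := by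
    refine Finset.sum_congr rfl fun j hj => ?_
    rw [hA j hj, ← habs j (hAR hj)]; ring
  have eB : ∑ j ∈ B, |W i j| = -∑ j ∈ B, τ' i * (W i j * (x j : ℝ)) := by
    rw [← Finset.sum_neg_distrib]
    refine Finset.sum_congr rfl fun j hj => ?_
    rw [hB j hj, ← habs j (hBR hj)]; ring
  have split : F W h i x
      = h i + ((∑ j ∈ A, W i j * (x j : ℝ)) + ∑ j ∈ B, W i j * (x j : ℝ))
        + ∑ j ∈ S, W i j * (x j : ℝ) := by
    unfold F
    rw [show (Finset.univ : Finset V) = R ∪ S from hUnion.symm,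
      Finset.sum_union hDisj, ← hAB, Finset.sum_union hd]
    ring
  rw [split, eA, eB, ← Finset.mul_sum, ← Finset.mul_sum]
  ring

lemma strictR (hτ1 : ∀ i, τ' i = 1 ∨ τ' i = -1)
    (hττ : ∀ i ∈ R, ∀ j ∈ R, 0 ≤ τ' i * W i j * τ' j)
    (hUnion : R ∪ S = Finset.univ) (hDisj : Disjoint R S)
    (hdeg : ∀ i ∈ R, ∑ j ∈ S, |W i j| < (∑ j ∈ R, |W i j|) - |h i|)
    {x : V → Act} (hC : Cons R τ' x) {i : V} (hiR : i ∈ R) :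
    0 < (x i : ℝ) * F W h i x := by
  have hb := abs_le.mp (tauS_bound (W := W) hτ1 S x i)
  have hhabs : |τ' i * h i| ≤ |h i| := by
    rw [abs_mul, tau_abs hτ1, one_mul]
  have hh' := abs_le.mp hhabs
  have hd := hdeg i hiR
  rcases hC with hC | hC
  · have hx : ∀ j ∈ R, (x j : ℝ) = τ' j := by
      intro j hj
      have h1 := hC j hj
      rcases hτ1 j with e | e <;> rw [e] at h1 ⊢ <;> linarith
    have key := keyR (h := h) (S := S) hτ1 hττ hUnion hDisj hiR (A := R) (B := (∅ : Finset V))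
      (Finset.union_empty R) (Finset.disjoint_empty_right R) hx
      (fun j hj => absurd hj (Finset.notMem_empty j))
    rw [Finset.sum_empty] at key
    have hxi : (x i : ℝ) = τ' i := hx i hiR
    rw [hxi]
    linarith [key, hb.1, hh'.1]
  · have hx : ∀ j ∈ R, (x j : ℝ) = -τ' j := by
      intro j hj
      have h1 := hC j hj
      rcases hτ1 j with e | e <;> rw [e] at h1 ⊢ <;> linarith
    have key := keyR (h := h) (S := S) hτ1 hττ hUnion hDisj hiR (A := (∅ : Finset V)) (B := R)
      (Finset.empty_union R) (Finset.disjoint_empty_left R)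
      (fun j hj => absurd hj (Finset.notMem_empty j)) hx
    rw [Finset.sum_empty] at key
    have hxi : (x i : ℝ) = -τ' i := hx i hiR
    have hflip : (x i : ℝ) * F W h i x = -(τ' i * F W h i x) := by rw [hxi]; ring
    rw [hflip]
    linarith [key, hb.2, hh'.2]

lemma PfMf_update_toM (hτ1 : ∀ i, τ' i = 1 ∨ τ' i = -1)
    {x : V → Act} {i : V} (hiR : i ∈ R) {a : Act} (ha : (a : ℝ) = -τ' i) :
    Pf R τ' (Function.update x i a) = (Pf R τ' x).erase i ∧
    Mf R τ' (Function.update x i a) = insert i (Mf R τ' x) := by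
  have hτa : τ' i * (a : ℝ) = -1 := by rw [ha, mul_neg, tau_sq hτ1]
  constructor
  · ext j
    by_cases hj : j = i
    · subst hj
      simp only [Pf, Finset.mem_filter, Finset.mem_erase, Function.update_self]
      constructor
      · rintro ⟨-, hc⟩; rw [hτa] at hc; norm_num at hc
      · rintro ⟨hc, -⟩; exact absurd rfl hc
    · simp only [Pf, Finset.mem_filter, Finset.mem_erase, Function.update_of_ne hj]
      exact ⟨fun hh => ⟨hj, hh⟩, fun hh => hh.2⟩
  · ext j
    by_cases hj : j = i
    · subst hj
      constructor
      · intro _; exact Finset.mem_insert_self _ _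
      · intro _
        refine Finset.mem_filter.mpr ⟨hiR, ?_⟩
        rw [Function.update_self]; exact hτa
    · simp only [Mf, Finset.mem_filter, Finset.mem_insert, Function.update_of_ne hj]
      constructor
      · exact fun hh => Or.inr hh
      · rintro (rfl | hh)
        · exact absurd rfl hj
        · exact hh

lemma PfMf_update_toP (hτ1 : ∀ i, τ' i = 1 ∨ τ' i = -1)
    {x : V → Act} {i : V} (hiR : i ∈ R) {a : Act} (ha : (a : ℝ) = τ' i) :
    Mf R τ' (Function.update x i a) = (Mf R τ' x).erase i ∧
    Pf R τ' (Function.update x i a) = insert i (Pf R τ' x) := by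
  have hτa : τ' i * (a : ℝ) = 1 := by rw [ha, tau_sq hτ1]
  constructor
  · ext j
    by_cases hj : j = i
    · subst hj
      simp only [Mf, Finset.mem_filter, Finset.mem_erase, Function.update_self]
      constructor
      · rintro ⟨-, hc⟩; rw [hτa] at hc; norm_num at hc
      · rintro ⟨hc, -⟩; exact absurd rfl hc
    · simp only [Mf, Finset.mem_filter, Finset.mem_erase, Function.update_of_ne hj]
      exact ⟨fun hh => ⟨hj, hh⟩, fun hh => hh.2⟩
  · ext j
    by_cases hj : j = i
    · subst hj
      constructor
      · intro _; exact Finset.mem_insert_self _ _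
      · intro _
        refine Finset.mem_filter.mpr ⟨hiR, ?_⟩
        rw [Function.update_self]; exact hτa
    · simp only [Pf, Finset.mem_filter, Finset.mem_insert, Function.update_of_ne hj]
      constructor
      · exact fun hh => Or.inr hh
      · rintro (rfl | hh)
        · exact absurd rfl hj
        · exact hh

lemma phaseB (hdiag : ∀ i, W i i = 0) (hτ1 : ∀ i, τ' i = 1 ∨ τ' i = -1)
    (hττ : ∀ i ∈ R, ∀ j ∈ R, 0 ≤ τ' i * W i j * τ' j)
    (hUnion : R ∪ S = Finset.univ) (hDisj : Disjoint R S)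
    (hindV : ∀ P M : Finset V, P ∪ M = R → Disjoint P M → P.Nonempty → M.Nonempty →
      (∃ i ∈ P, ∑ j ∈ P, |W i j| + (τ' i * h i + ∑ j ∈ S, |W i j|) < ∑ j ∈ M, |W i j|) ∨
      (∃ i ∈ M, (∑ j ∈ M, |W i j|) - (τ' i * h i - ∑ j ∈ S, |W i j|) < ∑ j ∈ P, |W i j|)) :
    ∀ n, ∀ x : V → Act, (Pf R τ' x).card ≤ n →
      (Mf R τ' x).Nonempty → (∀ i ∈ Mf R τ' x, τ' i * F W h i x ≤ 0) →
      ∃ y, Relation.ReflTransGen (BRStep W h) x y ∧ Cons R τ' y := by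
  intro n
  induction n with
  | zero =>
    intro x hcard _ _
    exact ⟨x, Relation.ReflTransGen.refl,
      consNeg hτ1 (Finset.card_eq_zero.mp (Nat.le_zero.mp hcard))⟩
  | succ n ih =>
    intro x hcard hM hinv
    by_cases hP : (Pf R τ' x).Nonempty
    · rcases hindV (Pf R τ' x) (Mf R τ' x) (PM_union hτ1 x) (PM_disj x) hP hM with
        ⟨i, hiP, hlt⟩ | ⟨i, hiM, hlt⟩
      · have hiR : i ∈ R := (Finset.mem_filter.mp hiP).1
        have key := keyR (h := h) hτ1 hττ hUnion hDisj hiR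
          (PM_union hτ1 x) (PM_disj x) (fun j hj => xval_P hτ1 hj) (fun j hj => xval_M hτ1 hj)
        have hb := abs_le.mp (tauS_bound (W := W) hτ1 S x i)
        have hFi : τ' i * F W h i x < 0 := by linarith [key, hb.2, hlt]
        have haprop : -τ' i = 1 ∨ -τ' i = -1 := by
          rcases hτ1 i with e | e <;> rw [e] <;> norm_num
        set a : Act := ⟨-τ' i, haprop⟩ with hadef
        have hav : (a : ℝ) = -τ' i := rfl
        have hxi : (x i : ℝ) = τ' i := xval_P hτ1 hiP
        have htne : (a : ℝ) ≠ (x i : ℝ) := by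
          rw [hav, hxi]
          rcases hτ1 i with e | e <;> rw [e] <;> norm_num
        have hbr : 0 ≤ (a : ℝ) * F W h i x := by
          have : (a : ℝ) * F W h i x = -(τ' i * F W h i x) := by rw [hav]; ring
          rw [this]; linarith
        have hstep := mk_step (h := h) hdiag a htne hbr
        set y : V → Act := Function.update x i a with hydef
        obtain ⟨hPf', hMf'⟩ := PfMf_update_toM (x := x) hτ1 hiR hav
        have hFup : ∀ j, F W h j y = F W h j x + W j i * ((a : ℝ) - (x i : ℝ)) :=
          fun j => F_update j i x a
        have hinv' : ∀ j ∈ Mf R τ' y, τ' j * F W h j y ≤ 0 := by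
          intro j hj
          rw [hMf'] at hj
          rcases Finset.mem_insert.mp hj with rfl | hj
          · have hFeq : F W h j y = F W h j x := by rw [hFup j, hdiag]; ring
            rw [hFeq]; linarith
          · have hjR : j ∈ R := (Finset.mem_filter.mp hj).1
            have h0 : 0 ≤ τ' j * W j i * τ' i := hττ j hjR i hiR
            have heq : τ' j * F W h j y
                = τ' j * F W h j x + (τ' j * W j i * τ' i) * (-2) := by
              rw [hFup j, hav, hxi]; ring
            have hprev := hinv j hj
            rw [heq]; linarith
        have hM' : (Mf R τ' y).Nonempty := by
          rw [hMf']; exact Finset.insert_nonempty _ _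
        have hcard' : (Pf R τ' y).card ≤ n := by
          rw [hPf', Finset.card_erase_of_mem hiP]
          omega
        obtain ⟨z, hz, hcz⟩ := ih y hcard' hM' hinv'
        exact ⟨z, Relation.ReflTransGen.head hstep hz, hcz⟩
      · exfalso
        have hiR : i ∈ R := (Finset.mem_filter.mp hiM).1
        have key := keyR (h := h) hτ1 hττ hUnion hDisj hiR
          (PM_union hτ1 x) (PM_disj x) (fun j hj => xval_P hτ1 hj) (fun j hj => xval_M hτ1 hj)
        have hb := abs_le.mp (tauS_bound (W := W) hτ1 S x i)
        have := hinv i hiM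
        linarith [key, hb.1, hlt]
    · exact ⟨x, Relation.ReflTransGen.refl,
        consNeg hτ1 (Finset.not_nonempty_iff_eq_empty.mp hP)⟩

lemma phaseA (hdiag : ∀ i, W i i = 0) (hτ1 : ∀ i, τ' i = 1 ∨ τ' i = -1)
    (hττ : ∀ i ∈ R, ∀ j ∈ R, 0 ≤ τ' i * W i j * τ' j)
    (hUnion : R ∪ S = Finset.univ) (hDisj : Disjoint R S)
    (hindV : ∀ P M : Finset V, P ∪ M = R → Disjoint P M → P.Nonempty → M.Nonempty →
      (∃ i ∈ P, ∑ j ∈ P, |W i j| + (τ' i * h i + ∑ j ∈ S, |W i j|) < ∑ j ∈ M, |W i j|) ∨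
      (∃ i ∈ M, (∑ j ∈ M, |W i j|) - (τ' i * h i - ∑ j ∈ S, |W i j|) < ∑ j ∈ P, |W i j|)) :
    ∀ n, ∀ x : V → Act, (Mf R τ' x).card ≤ n →
      ∃ y, Relation.ReflTransGen (BRStep W h) x y ∧ Cons R τ' y := by
  intro n
  induction n with
  | zero =>
    intro x hcard
    exact ⟨x, Relation.ReflTransGen.refl,
      consPos hτ1 (Finset.card_eq_zero.mp (Nat.le_zero.mp hcard))⟩
  | succ n ih =>
    intro x hcard
    by_cases hM : (Mf R τ' x).Nonempty
    · by_cases hflip : ∃ i ∈ Mf R τ' x, 0 < τ' i * F W h i x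
      · obtain ⟨i, hiM, hFi⟩ := hflip
        have hiR : i ∈ R := (Finset.mem_filter.mp hiM).1
        set a : Act := ⟨τ' i, hτ1 i⟩ with hadef
        have hav : (a : ℝ) = τ' i := rfl
        have hxi : (x i : ℝ) = -τ' i := xval_M hτ1 hiM
        have htne : (a : ℝ) ≠ (x i : ℝ) := by
          rw [hav, hxi]
          rcases hτ1 i with e | e <;> rw [e] <;> norm_num
        have hbr : 0 ≤ (a : ℝ) * F W h i x := by rw [hav]; linarith
        have hstep := mk_step (h := h) hdiag a htne hbr
        obtain ⟨hMf', hPf'⟩ := PfMf_update_toP (x := x) hτ1 hiR hav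
        have hcard' : (Mf R τ' (Function.update x i a)).card ≤ n := by
          rw [hMf', Finset.card_erase_of_mem hiM]
          omega
        obtain ⟨z, hz, hcz⟩ := ih (Function.update x i a) hcard'
        exact ⟨z, Relation.ReflTransGen.head hstep hz, hcz⟩
      · push_neg at hflip
        exact phaseB hdiag hτ1 hττ hUnion hDisj hindV (Pf R τ' x).card x le_rfl hM hflip
    · exact ⟨x, Relation.ReflTransGen.refl,
        consPos hτ1 (Finset.not_nonempty_iff_eq_empty.mp hM)⟩

lemma cons_step (hdiag : ∀ i, W i i = 0) (hτ1 : ∀ i, τ' i = 1 ∨ τ' i = -1)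
    (hττ : ∀ i ∈ R, ∀ j ∈ R, 0 ≤ τ' i * W i j * τ' j)
    (hUnion : R ∪ S = Finset.univ) (hDisj : Disjoint R S)
    (hsymS : ∀ i ∈ S, ∀ j ∈ S, W i j = W j i)
    (hdeg : ∀ i ∈ R, ∑ j ∈ S, |W i j| < (∑ j ∈ R, |W i j|) - |h i|)
    {x y : V → Act} (hC : Cons R τ' x) (hs : BRStep W h x y) :
    Cons R τ' y ∧ Phi W h S x ≤ Phi W h S y := by
  obtain ⟨i, hoff, hne, hbr⟩ := hs
  have hyu : y = Function.update x i (y i) := eq_update_self hoff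
  have hiS : i ∈ S := by
    by_contra hiS
    have hiR : i ∈ R := by
      have hu := Finset.mem_univ i
      rw [← hUnion] at hu
      exact (Finset.mem_union.mp hu).resolve_right hiS
    have hpos := strictR hτ1 hττ hUnion hDisj hdeg hC hiR
    have h1 : (y i : ℝ) = -(x i : ℝ) := by
      rcases act_eq_or (x i) (y i) with e | e
      · exact absurd e hne
      · exact e
    have h2 := (mem_br_iff hdiag).mp hbr (x i)
    have h3 : (y i : ℝ) * F W h i x = -((x i : ℝ) * F W h i x) := by rw [h1]; ring
    rw [h3] at h2
    linarith
  have hiR : i ∉ R := Finset.disjoint_right.mp hDisj hiS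
  constructor
  · rcases hC with hC | hC
    · left
      intro j hjR
      rw [hoff j (by rintro rfl; exact hiR hjR)]
      exact hC j hjR
    · right
      intro j hjR
      rw [hoff j (by rintro rfl; exact hiR hjR)]
      exact hC j hjR
  · have hΦ := phi_step (h := h) hdiag hsymS hiS x (y i)
    rw [← hyu] at hΦ
    have hge := (mem_br_iff hdiag).mp hbr (x i)
    have hexp : 2 * ((y i : ℝ) - (x i : ℝ)) * F W h i x
        = 2 * ((y i : ℝ) * F W h i x - (x i : ℝ) * F W h i x) := by ring
    rw [hΦ, hexp]
    linarith

lemma cons_rtg (hdiag : ∀ i, W i i = 0) (hτ1 : ∀ i, τ' i = 1 ∨ τ' i = -1)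
    (hττ : ∀ i ∈ R, ∀ j ∈ R, 0 ≤ τ' i * W i j * τ' j)
    (hUnion : R ∪ S = Finset.univ) (hDisj : Disjoint R S)
    (hsymS : ∀ i ∈ S, ∀ j ∈ S, W i j = W j i)
    (hdeg : ∀ i ∈ R, ∑ j ∈ S, |W i j| < (∑ j ∈ R, |W i j|) - |h i|)
    {x y : V → Act} (hC : Cons R τ' x)
    (hp : Relation.ReflTransGen (BRStep W h) x y) :
    Cons R τ' y ∧ Phi W h S x ≤ Phi W h S y := by
  induction hp with
  | refl => exact ⟨hC, le_rfl⟩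
  | tail hxb hbc ih =>
    obtain ⟨hCb, hpb⟩ := ih
    obtain ⟨hCc, hpc⟩ := cons_step hdiag hτ1 hττ hUnion hDisj hsymS hdeg hCb hbc
    exact ⟨hCc, le_trans hpb hpc⟩

end SNC18

theorem stmt18 {V : Type*} [Fintype V] [DecidableEq V] [Nonempty V]
    (W : V → V → ℝ) (h : V → ℝ) (hdiag : ∀ i, W i i = 0)
    (R S : Finset V) (hUnion : R ∪ S = Finset.univ) (hDisj : Disjoint R S)
    (hsbR : StructurallyBalanced (fun i j : {i // i ∈ R} => W i.1 j.1))
    (hsymS : ∀ i ∈ S, ∀ j ∈ S, W i j = W j i)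
    (τ : {i // i ∈ R} → Act)
    (hτ : ∀ i j : {i // i ∈ R}, 0 ≤ (τ i : ℝ) * W i.1 j.1 * (τ j : ℝ))
    (hind : Indecomposable (fun i j : {i // i ∈ R} => (τ i : ℝ) * W i.1 j.1 * (τ j : ℝ))
      (fun i : {i // i ∈ R} => (τ i : ℝ) * h i.1 - ∑ j ∈ S, |W i.1 j|)
      (fun i : {i // i ∈ R} => (τ i : ℝ) * h i.1 + ∑ j ∈ S, |W i.1 j|))
    (hdeg : ∀ i ∈ R, ∑ j ∈ S, |W i j| < (∑ j ∈ R, |W i j|) - |h i|) :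
    ∃ Nbar : Set (V → Act), Nbar.Nonempty ∧ GloballyBRStable W h Nbar ∧
      Nbar ⊆ {x : V → Act | IsNash W h x} := by
  classical
  set τ' : V → ℝ := fun i => if hi : i ∈ R then ((τ ⟨i, hi⟩ : Act) : ℝ) else 1 with hτ'def
  have hτR : ∀ i (hi : i ∈ R), τ' i = (τ ⟨i, hi⟩ : ℝ) := by
    intro i hi
    simp [hτ'def, hi]
  have hτ1 : ∀ i, τ' i = 1 ∨ τ' i = -1 := by
    intro i
    by_cases hi : i ∈ R
    · rw [hτR i hi]; exact (τ ⟨i, hi⟩).2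
    · simp [hτ'def, hi]
  have hττ' : ∀ i ∈ R, ∀ j ∈ R, 0 ≤ τ' i * W i j * τ' j := by
    intro i hi j hj
    rw [hτR i hi, hτR j hj]
    exact hτ ⟨i, hi⟩ ⟨j, hj⟩
  have hindV : ∀ P M : Finset V, P ∪ M = R → Disjoint P M → P.Nonempty → M.Nonempty →
      (∃ i ∈ P, ∑ j ∈ P, |W i j| + (τ' i * h i + ∑ j ∈ S, |W i j|) < ∑ j ∈ M, |W i j|) ∨
      (∃ i ∈ M, (∑ j ∈ M, |W i j|) - (τ' i * h i - ∑ j ∈ S, |W i j|) < ∑ j ∈ P, |W i j|) := by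
    intro P M hPM hd hP hM
    have hPR : P ⊆ R := hPM ▸ Finset.subset_union_left
    have hMR : M ⊆ R := hPM ▸ Finset.subset_union_right
    have habs : ∀ i j : {k // k ∈ R}, |(τ i : ℝ) * W i.1 j.1 * (τ j : ℝ)| = |W i.1 j.1| := by
      intro i j
      rw [abs_mul, abs_mul, SNC18.act_abs (τ i), SNC18.act_abs (τ j), one_mul, mul_one]
    have hsumP : ∀ i : {k // k ∈ R},
        ∑ j ∈ P.subtype (· ∈ R), |(τ i : ℝ) * W i.1 j.1 * (τ j : ℝ)| = ∑ j ∈ P, |W i.1 j| := by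
      intro i
      calc ∑ j ∈ P.subtype (· ∈ R), |(τ i : ℝ) * W i.1 j.1 * (τ j : ℝ)|
          = ∑ j ∈ P.subtype (· ∈ R), |W i.1 j.1| :=
            Finset.sum_congr rfl fun j _ => habs i j
        _ = ∑ j ∈ P, |W i.1 j| :=
            Finset.sum_subtype_of_mem (fun j => |W i.1 j|) fun j hj => hPR hj
    have hsumM : ∀ i : {k // k ∈ R},
        ∑ j ∈ M.subtype (· ∈ R), |(τ i : ℝ) * W i.1 j.1 * (τ j : ℝ)| = ∑ j ∈ M, |W i.1 j| := by
      intro i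
      calc ∑ j ∈ M.subtype (· ∈ R), |(τ i : ℝ) * W i.1 j.1 * (τ j : ℝ)|
          = ∑ j ∈ M.subtype (· ∈ R), |W i.1 j.1| :=
            Finset.sum_congr rfl fun j _ => habs i j
        _ = ∑ j ∈ M, |W i.1 j| :=
            Finset.sum_subtype_of_mem (fun j => |W i.1 j|) fun j hj => hMR hj
    have hU' : P.subtype (· ∈ R) ∪ M.subtype (· ∈ R) = Finset.univ := by
      ext j
      simp only [Finset.mem_union, Finset.mem_subtype, Finset.mem_univ, iff_true]
      have hj2 : j.1 ∈ P ∪ M := hPM.symm ▸ j.2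
      exact Finset.mem_union.mp hj2
    have hd' : Disjoint (P.subtype (· ∈ R)) (M.subtype (· ∈ R)) := by
      rw [Finset.disjoint_left]
      intro j hjP hjM
      exact Finset.disjoint_left.mp hd (Finset.mem_subtype.mp hjP) (Finset.mem_subtype.mp hjM)
    have hP' : (P.subtype (· ∈ R)).Nonempty := by
      obtain ⟨i, hi⟩ := hP
      exact ⟨⟨i, hPR hi⟩, Finset.mem_subtype.mpr hi⟩
    have hM' : (M.subtype (· ∈ R)).Nonempty := by
      obtain ⟨i, hi⟩ := hM
      exact ⟨⟨i, hMR hi⟩, Finset.mem_subtype.mpr hi⟩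
    rcases hind _ _ hU' hd' hP' hM' with ⟨i, hiP, hlt⟩ | ⟨i, hiM, hlt⟩
    · left
      obtain ⟨iv, hivR⟩ := i
      refine ⟨iv, Finset.mem_subtype.mp hiP, ?_⟩
      rw [hsumP ⟨iv, hivR⟩, hsumM ⟨iv, hivR⟩] at hlt
      rw [hτR iv hivR]
      exact hlt
    · right
      obtain ⟨iv, hivR⟩ := i
      refine ⟨iv, Finset.mem_subtype.mp hiM, ?_⟩
      rw [hsumP ⟨iv, hivR⟩, hsumM ⟨iv, hivR⟩] at hlt
      rw [hτR iv hivR]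
      exact hlt
  have hreach : ∀ x : V → Act,
      ∃ y, Relation.ReflTransGen (BRStep W h) x y ∧ SNC18.Cons R τ' y :=
    fun x => SNC18.phaseA hdiag hτ1 hττ' hUnion hDisj hindV (SNC18.Mf R τ' x).card x le_rfl
  have hrtg : ∀ {x y : V → Act}, SNC18.Cons R τ' x →
      Relation.ReflTransGen (BRStep W h) x y →
      SNC18.Cons R τ' y ∧ SNC18.Phi W h S x ≤ SNC18.Phi W h S y :=
    fun hC hp => SNC18.cons_rtg hdiag hτ1 hττ' hUnion hDisj hsymS hdeg hC hp
  have hreach2 : ∀ x : V → Act, ∃ z, (SNC18.Cons R τ' z ∧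
      ∀ w, Relation.ReflTransGen (BRStep W h) z w →
        SNC18.Phi W h S w ≤ SNC18.Phi W h S z) ∧
      Relation.ReflTransGen (BRStep W h) x z := by
    intro x
    obtain ⟨y, hxy, hCy⟩ := hreach x
    obtain ⟨z, hz, hmax⟩ := Finset.exists_max_image
      (Finset.univ.filter fun w => Relation.ReflTransGen (BRStep W h) y w)
      (SNC18.Phi W h S)
      ⟨y, Finset.mem_filter.mpr ⟨Finset.mem_univ y, Relation.ReflTransGen.refl⟩⟩
    have hyz : Relation.ReflTransGen (BRStep W h) y z := (Finset.mem_filter.mp hz).2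
    refine ⟨z, ⟨(hrtg hCy hyz).1, ?_⟩, hxy.trans hyz⟩
    intro w hw
    exact hmax w (Finset.mem_filter.mpr ⟨Finset.mem_univ w, hyz.trans hw⟩)
  refine ⟨{x : V → Act | SNC18.Cons R τ' x ∧
      ∀ y, Relation.ReflTransGen (BRStep W h) x y →
        SNC18.Phi W h S y ≤ SNC18.Phi W h S x}, ?_, ⟨?_, ?_⟩, ?_⟩
  · obtain ⟨z, hzmem, -⟩ := hreach2 (fun _ => onePt)
    exact ⟨z, hzmem⟩
  · intro x
    obtain ⟨z, hzmem, hp⟩ := hreach2 x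
    exact ⟨z, hzmem, hp⟩
  · intro x hx y hxy
    simp only [Set.mem_setOf_eq] at hx ⊢
    obtain ⟨hCx, hmax⟩ := hx
    have h1 := hrtg hCx hxy
    exact ⟨h1.1, fun w hw => le_trans (hmax w (hxy.trans hw)) h1.2⟩
  · intro x hx
    simp only [Set.mem_setOf_eq] at hx ⊢
    obtain ⟨hCx, hmax⟩ := hx
    intro i
    by_cases hiR : i ∈ R
    · exact SNC18.mem_br_of_nonneg hdiag
        (le_of_lt (SNC18.strictR hτ1 hττ' hUnion hDisj hdeg hCx hiR))
    · have hiS : i ∈ S := by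
        have hu := Finset.mem_univ i
        rw [← hUnion] at hu
        exact (Finset.mem_union.mp hu).resolve_left hiR
      by_contra hbr
      rw [SNC18.mem_br_iff hdiag] at hbr
      push_neg at hbr
      obtain ⟨b, hb⟩ := hbr
      have hbne : (b : ℝ) ≠ (x i : ℝ) := by
        intro e
        rw [e] at hb
        exact lt_irrefl _ hb
      have hbF : 0 ≤ (b : ℝ) * SNC18.F W h i x := by
        rcases SNC18.act_eq_or (x i) b with e | e
        · exact absurd (by rw [e]) hbne
        · have he : (b : ℝ) * SNC18.F W h i x = -((x i : ℝ) * SNC18.F W h i x) := by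
            rw [e]; ring
          linarith [hb, he]
      have hstep := SNC18.mk_step (h := h) hdiag b hbne hbF
      have hphi := SNC18.phi_step (h := h) hdiag hsymS hiS x b
      have hle := hmax _ (Relation.ReflTransGen.single hstep)
      have hexp : 2 * ((b : ℝ) - (x i : ℝ)) * SNC18.F W h i x
          = 2 * ((b : ℝ) * SNC18.F W h i x - (x i : ℝ) * SNC18.F W h i x) := by ring
      rw [hexp] at hphi
      linarith
end
end
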